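/- Let R be a left-linear iTRS. For every divergent (i.e. not strongly convergent) strongly continuous transfinite reduction sequence starting from a term s, of any ordinal length α, there exists a divergent reduction sequence starting from s of length at most ω. -/

import Mathlib

/-!
Infinitary term rewriting: possibly infinite first-order terms, infinitary
term rewriting systems (iTRSs), strongly convergent transfinite reductions,
parallel steps, multi-steps (complete developments), and clusters,
following Endrullis–Grabmayer–Hendriks–Klop–van Oostrom,
"Infinitary Term Rewriting for Weakly Orthogonal Systems".
-/

namespace WOInf

/-- Positions in terms: finite sequences of naturals (child indices, `1`-based). -/
abbrev Pos : Type := List ℕ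

/-- Possibly infinite terms over the signature `(F, ar)` with variables `V`:
partial maps from positions to symbols with defined root, whose domain
respects arities (the `i`-th child of a node is defined exactly when the node
carries a function symbol `f` and `1 ≤ i ≤ ar f`); such a domain is
automatically nonempty and prefix-closed. -/
structure Term (F V : Type) (ar : F → ℕ) : Type where
  val : Pos → Option (F ⊕ V)
  root_isSome : (val []).isSome
  node : ∀ p i, (val (p ++ [i])).isSome ↔
      ∃ f, val p = some (Sum.inl f) ∧ 1 ≤ i ∧ i ≤ ar f

/-- Finite terms (used for left-hand sides of rules). -/
inductive FTerm (F V : Type) (ar : F → ℕ) : Type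
  | var : V → FTerm F V ar
  | app : (f : F) → (Fin (ar f) → FTerm F V ar) → FTerm F V ar

variable {F V : Type} {ar : F → ℕ}

/-- The symbol of a finite term at a position (child indices `1`-based). -/
def FTerm.val : FTerm F V ar → Pos → Option (F ⊕ V)
  | .var x, [] => some (Sum.inr x)
  | .app f _, [] => some (Sum.inl f)
  | .var _, _ :: _ => none
  | .app f ts, i :: p =>
      if h : 1 ≤ i ∧ i ≤ ar f then FTerm.val (ts ⟨i - 1, by omega⟩) p else none

/-- An infinitary term rewriting system (iTRS): finitely many rules
`ℓ → r` where `ℓ` is a finite non-variable term, `r` is a possibly infinite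
term, and every variable of `r` occurs in `ℓ`. -/
structure ITRS (F V : Type) (ar : F → ℕ) : Type 1 where
  /-- the (finite) index type of rules -/
  R : Type
  finR : Finite R
  /-- left-hand sides -/
  lhs : R → FTerm F V ar
  /-- right-hand sides -/
  rhs : R → Term F V ar
  lhs_not_var : ∀ ρ x, lhs ρ ≠ FTerm.var x
  var_cond : ∀ ρ x p, (rhs ρ).val p = some (Sum.inr x) →
      ∃ q, (lhs ρ).val q = some (Sum.inr x)

/-- The subtree of `t` at position `p` is (extensionally) the term `u`. -/
def SubtreeEq (t : Term F V ar) (p : Pos) (u : Term F V ar) : Prop :=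
  ∀ q, t.val (p ++ q) = u.val q

/-- The subterm of `t` at position `p` is the instance of the finite term `ℓ`
under the substitution `σ`. -/
def MatchesAt (ℓ : FTerm F V ar) (σ : V → Term F V ar)
    (t : Term F V ar) (p : Pos) : Prop :=
  (∀ q f, ℓ.val q = some (Sum.inl f) → t.val (p ++ q) = some (Sum.inl f)) ∧
  (∀ q x, ℓ.val q = some (Sum.inr x) → SubtreeEq t (p ++ q) (σ x))

/-- The subterm of `t` at position `p` is the instance of the possibly
infinite term `r` under the substitution `σ`. -/
def InstanceAt (r : Term F V ar) (σ : V → Term F V ar)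
    (t : Term F V ar) (p : Pos) : Prop :=
  (∀ q f, r.val q = some (Sum.inl f) → t.val (p ++ q) = some (Sum.inl f)) ∧
  (∀ q x, r.val q = some (Sum.inr x) → SubtreeEq t (p ++ q) (σ x))

variable (S : ITRS F V ar)

/-- A redex (occurrence): a position together with a rule. -/
structure Redex (S : ITRS F V ar) : Type where
  pos : Pos
  rule : S.R

/-- `u` is a redex occurrence in `t`. -/
def IsRedex (t : Term F V ar) (u : Redex S) : Prop :=
  ∃ σ, MatchesAt (S.lhs u.rule) σ t u.pos

/-- `t` rewrites to `t'` by contracting the redex occurrence `u`. -/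
def StepRedex (u : Redex S) (t t' : Term F V ar) : Prop :=
  ∃ σ, MatchesAt (S.lhs u.rule) σ t u.pos ∧
       InstanceAt (S.rhs u.rule) σ t' u.pos ∧
       ∀ q, ¬ u.pos <+: q → t'.val q = t.val q

/-- `t` rewrites to `t'` by a rewrite step at position `p`. -/
def StepAt (p : Pos) (t t' : Term F V ar) : Prop :=
  ∃ ρ : S.R, StepRedex S ⟨p, ρ⟩ t t'

/-- The pattern of a redex: the positions of the function symbols of its
left-hand side, placed at its position. -/
def Redex.pattern {S : ITRS F V ar} (u : Redex S) : Set Pos :=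
  {p | ∃ q f, p = u.pos ++ q ∧ (S.lhs u.rule).val q = some (Sum.inl f)}

/-- Two redexes overlap if their patterns share a position. -/
def Overlap (u v : Redex S) : Prop := (u.pattern ∩ v.pattern).Nonempty

/-- A multi-redex in `t`: a set of pairwise non-overlapping redex
occurrences of `t`. -/
def IsMultiRedex (t : Term F V ar) (U : Set (Redex S)) : Prop :=
  (∀ u ∈ U, IsRedex S t u) ∧ U.Pairwise fun u v => ¬ Overlap S u v

/-- Left-linearity: no left-hand side contains a repeated variable. -/
def LeftLinear : Prop :=
  ∀ ρ p q x, (S.lhs ρ).val p = some (Sum.inr x) →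
    (S.lhs ρ).val q = some (Sum.inr x) → p = q

/-- Weak orthogonality: left-linear and all critical pairs are trivial;
for left-linear systems the latter is equivalent to the requirement that
contracting either of two overlapping redexes of any term yields the same
result. -/
def WeaklyOrthogonal : Prop :=
  LeftLinear S ∧
  ∀ (t t₁ t₂ : Term F V ar) (u v : Redex S), Overlap S u v →
    StepRedex S u t t₁ → StepRedex S v t t₂ → t₁ = t₂

/-- A rule is collapsing if its right-hand side is a variable. -/
def Collapsing (ρ : S.R) : Prop := ∃ x, (S.rhs ρ).val [] = some (Sum.inr x)

/-- The system has no collapsing rules. -/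
def NonCollapsing : Prop := ∀ ρ, ¬ Collapsing S ρ

/-- The system is a TRS: all right-hand sides are finite terms. -/
def IsTRS : Prop := ∀ ρ, {p : Pos | ((S.rhs ρ).val p).isSome}.Finite

/-- Two terms agree at all positions of depth at most `k`
(equivalently, their distance is at most `2^{-k}`). -/
def AgreeUpTo (k : ℕ) (s t : Term F V ar) : Prop :=
  ∀ p : Pos, p.length ≤ k → s.val p = t.val p

/-- `IsSCRed S α f p s t`: the data `(f, p)` constitutes a strongly convergent
reduction of ordinal length `α` from `s` to `t`: `f β` is the `β`-th term,
`p β` the position of the `β`-th step, and every limit ordinal `λ ≤ α` is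
approached with the terms converging to `f λ` and the depths of the steps
tending to infinity. -/
def IsSCRed (α : Ordinal) (f : Ordinal → Term F V ar) (p : Ordinal → Pos)
    (s t : Term F V ar) : Prop :=
  f 0 = s ∧ f α = t ∧
  (∀ β < α, StepAt S (p β) (f β) (f (β + 1))) ∧
  ∀ l ≤ α, Order.IsSuccLimit l → ∀ k : ℕ, ∃ β < l, ∀ γ, β ≤ γ → γ < l →
    AgreeUpTo k (f γ) (f l) ∧ k ≤ (p γ).length

/-- The infinitary rewriting relation `s ↠∞ t`: there is a strongly
convergent reduction (of some ordinal length) from `s` to `t`. -/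
def IRed (s t : Term F V ar) : Prop :=
  ∃ (α : Ordinal.{0}) (f : Ordinal → Term F V ar) (p : Ordinal → Pos),
    IsSCRed S α f p s t

/-- `IsSContRed S α f p s`: a strongly continuous reduction sequence of
ordinal length `α` starting at `s`: convergence of the terms and depths
tending to infinity are required at every limit ordinal strictly below `α`. -/
def IsSContRed (α : Ordinal) (f : Ordinal → Term F V ar) (p : Ordinal → Pos)
    (s : Term F V ar) : Prop :=
  f 0 = s ∧
  (∀ β < α, StepAt S (p β) (f β) (f (β + 1))) ∧
  ∀ l < α, Order.IsSuccLimit l → ∀ k : ℕ, ∃ β < l, ∀ γ, β ≤ γ → γ < l →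
    AgreeUpTo k (f γ) (f l) ∧ k ≤ (p γ).length

/-- A strongly continuous reduction sequence of length `α` with step
positions `p` is divergent (not strongly convergent) if `α` is a limit
ordinal and the depths of the steps do not tend to infinity when
approaching `α`. -/
def Divergent (α : Ordinal) (p : Ordinal → Pos) : Prop :=
  Order.IsSuccLimit α ∧ ¬ ∀ k : ℕ, ∃ β < α, ∀ γ, β ≤ γ → γ < α → k ≤ (p γ).length

/-- A set of redexes at pairwise disjoint (parallel) positions. -/
def ParallelSet (U : Set (Redex S)) : Prop :=
  U.Pairwise fun u v => ¬ u.pos <+: v.pos ∧ ¬ v.pos <+: u.pos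

/-- The parallel step `t ⊸_U t'`: the simultaneous contraction (complete
development) of a set `U` of redexes of `t` at pairwise disjoint positions. -/
def ParStep (U : Set (Redex S)) (t t' : Term F V ar) : Prop :=
  ParallelSet S U ∧
  (∀ u ∈ U, ∃ σ, MatchesAt (S.lhs u.rule) σ t u.pos ∧
      InstanceAt (S.rhs u.rule) σ t' u.pos) ∧
  ∀ q, (∀ u ∈ U, ¬ u.pos <+: q) → t'.val q = t.val q

/-- The descendants (residuals) of the position `q` across a rewrite step
with rule `ρ` at position `p`: positions not below `p` descend to themselves,
and positions within the substitution part are relocated according to the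
occurrences of the corresponding variable in the right-hand side. -/
def Descendants (ρ : S.R) (p : Pos) (q : Pos) : Set Pos :=
  {q' | (¬ p <+: q ∧ q' = q) ∨
    ∃ q₁ q₂ x, q = p ++ q₁ ++ q₂ ∧ (S.lhs ρ).val q₁ = some (Sum.inr x) ∧
      ∃ q₁', (S.rhs ρ).val q₁' = some (Sum.inr x) ∧ q' = p ++ q₁' ++ q₂}

/-- The overlap relation on the redex occurrences of `t`. -/
def OverlapIn (t : Term F V ar) (u v : Redex S) : Prop :=
  IsRedex S t u ∧ IsRedex S t v ∧ Overlap S u v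

/-- A cluster in `t`: a nonempty connected component of the overlap relation
on the redex occurrences of `t`. -/
def IsCluster (t : Term F V ar) (c : Set (Redex S)) : Prop :=
  c.Nonempty ∧ (∀ u ∈ c, IsRedex S t u) ∧
  (∀ u ∈ c, ∀ v, IsRedex S t v → Overlap S u v → v ∈ c) ∧
  (∀ u ∈ c, ∀ v ∈ c, Relation.ReflTransGen (OverlapIn S t) u v)

/-- The pattern of a cluster: the union of the patterns of its redexes. -/
def clusterPattern (c : Set (Redex S)) : Set Pos := ⋃ u ∈ c, u.pattern

/-- A `Y`-cluster: a cluster containing two redexes at parallel (disjoint)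
positions. -/
def IsYCluster (c : Set (Redex S)) : Prop :=
  ∃ u ∈ c, ∃ v ∈ c, ¬ u.pos <+: v.pos ∧ ¬ v.pos <+: u.pos

/-- A cluster is infinite if the set of roots of its redexes is infinite. -/
def InfiniteCluster (c : Set (Redex S)) : Prop :=
  (Redex.pos '' c).Infinite

/-- A trivial cluster: a `Y`-cluster or an infinite `I`-cluster
(a cluster that is not a `Y`-cluster is an `I`-cluster). -/
def TrivialCluster (c : Set (Redex S)) : Prop :=
  IsYCluster S c ∨ InfiniteCluster S c

/-- `IsDevelopment S α f rp U s t`: a (complete) development of the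
multi-redex `U 0` of `s`: a strongly convergent reduction from `s` to `t` of
length `α`, each of whose steps contracts a member `rp β` of the current set
`U β` of residuals of `U 0`, where residuals are tracked along steps (via the
descendant relation) and along limits, and no residual is left at the end. -/
def IsDevelopment (α : Ordinal) (f : Ordinal → Term F V ar)
    (rp : Ordinal → Redex S) (U : Ordinal → Set (Redex S))
    (s t : Term F V ar) : Prop :=
  f 0 = s ∧ f α = t ∧ U α = ∅ ∧
  (∀ β < α, rp β ∈ U β ∧ StepRedex S (rp β) (f β) (f (β + 1)) ∧
    U (β + 1) = ⋃ v ∈ U β \ {rp β},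
      {w : Redex S | w.rule = v.rule ∧
        w.pos ∈ Descendants S (rp β).rule (rp β).pos v.pos}) ∧
  ∀ l ≤ α, Order.IsSuccLimit l →
    (U l = {u | ∃ β < l, ∀ γ, β ≤ γ → γ < l → u ∈ U γ}) ∧
    ∀ k : ℕ, ∃ β < l, ∀ γ, β ≤ γ → γ < l →
      AgreeUpTo k (f γ) (f l) ∧ k ≤ (rp γ).pos.length

/-- The multi-step `s ⊸_U₀ t`: a complete development of the multi-redex
`U₀` of `s`. -/
def MultiStep (U₀ : Set (Redex S)) (s t : Term F V ar) : Prop :=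
  IsMultiRedex S s U₀ ∧
  ∃ (α : Ordinal.{0}) (f : Ordinal → Term F V ar) (rp : Ordinal → Redex S)
    (U : Ordinal → Set (Redex S)), U 0 = U₀ ∧ IsDevelopment S α f rp U s t

/-- The multi-step rewrite relation `s ⊸ t`. -/
def MStep (s t : Term F V ar) : Prop := ∃ U₀, MultiStep S U₀ s t

end WOInf

namespace WOInf

section Compression

variable {F V : Type} {ar : F → ℕ}

/-! ### Basic lemmas about terms and positions -/

theorem Term.ext' {t u : Term F V ar} (h : ∀ p, t.val p = u.val p) : t = u := by
  cases t; cases u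
  simp only [Term.mk.injEq]
  funext p; exact h p

theorem Term.prefix_isSome {t : Term F V ar} {r : Pos} (hr : (t.val r).isSome)
    {r' : Pos} (hpre : r' <+: r) : (t.val r').isSome := by
  induction r using List.reverseRecOn generalizing r' with
  | nil =>
    have : r' = [] := List.prefix_nil.mp hpre
    subst this; exact hr
  | append_singleton a i ih =>
    rcases (t.node a i).mp hr with ⟨f, hf, -, -⟩
    rcases eq_or_ne r' (a ++ [i]) with h | h
    · subst h; exact hr
    · have hlen : r'.length ≤ a.length := by
        have := hpre.length_le
        simp only [List.length_append, List.length_singleton] at this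
        rcases Nat.lt_or_ge r'.length (a.length + 1) with h' | h'
        · omega
        · exfalso; apply h
          exact List.IsPrefix.eq_of_length_le hpre (by simpa using h')
      have : r' <+: a :=
        List.prefix_of_prefix_length_le hpre (List.prefix_append a [i]) hlen
      exact ih (by rw [hf]; rfl) this

theorem Term.not_isSome_below_var {t : Term F V ar} {p : Pos} {x : V}
    (h : t.val p = some (Sum.inr x)) {w : Pos} (hw : w ≠ []) :
    t.val (p ++ w) = none := by
  induction w using List.reverseRecOn with
  | nil => exact absurd rfl hw
  | append_singleton a i ih =>
    by_contra hne
    have hsome : (t.val (p ++ (a ++ [i]))).isSome := Option.isSome_iff_ne_none.mpr hne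
    rw [← List.append_assoc] at hsome
    rcases (t.node (p ++ a) i).mp hsome with ⟨f, hf, -, -⟩
    rcases eq_or_ne a [] with rfl | ha
    · simp only [List.append_nil] at hf; rw [h] at hf; cases hf
    · rw [ih ha] at hf; cases hf

theorem var_pos_not_prefix {t : Term F V ar} {p q : Pos} {x y : V}
    (hp : t.val p = some (Sum.inr x)) (hq : t.val q = some (Sum.inr y))
    (hne : p ≠ q) : ¬ p <+: q := by
  rintro ⟨w, rfl⟩
  have hw : w ≠ [] := by rintro rfl; exact hne (by simp)
  rw [Term.not_isSome_below_var hp hw] at hq; cases hq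

/-- Two prefixes of the same list are comparable. -/
theorem prefix_comparable {a b c : Pos} (ha : a <+: c) (hb : b <+: c) :
    a <+: b ∨ b <+: a := by
  rcases Nat.le_total a.length b.length with h | h
  · exact Or.inl (List.prefix_of_prefix_length_le ha hb h)
  · exact Or.inr (List.prefix_of_prefix_length_le hb ha h)

/-! ### Depth bounds for finite terms -/

theorem FTerm.val_nil_isSome (ℓ : FTerm F V ar) : (ℓ.val []).isSome := by
  cases ℓ <;> rfl

theorem FTerm.val_child {ℓ : FTerm F V ar} {w : Pos} {f : F}
    (h : ℓ.val w = some (Sum.inl f)) {i : ℕ} (h1 : 1 ≤ i) (h2 : i ≤ ar f) :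
    (ℓ.val (w ++ [i])).isSome := by
  induction w generalizing ℓ with
  | nil =>
    cases ℓ with
    | var x => cases h
    | app g ts =>
      have : g = f := by simpa [FTerm.val] using h
      subst this
      simp only [List.nil_append, FTerm.val, h1, h2, and_self, dite_true]
      exact FTerm.val_nil_isSome _
  | cons j w' ih =>
    cases ℓ with
    | var x => cases h
    | app g ts =>
      simp only [FTerm.val] at h ⊢
      split at h
      · simp only [List.cons_append, FTerm.val]; split
        · show (FTerm.val _ (w' ++ [i])).isSome = true
          exact ih h
        · exact (‹¬(1 ≤ j ∧ j ≤ ar g)› ‹1 ≤ j ∧ j ≤ ar g›).elim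
      · cases h

def FTerm.depth : FTerm F V ar → ℕ
  | .var _ => 1
  | .app f ts => 1 + (Finset.univ.sup fun i : Fin (ar f) => (ts i).depth)

theorem FTerm.lt_depth {ℓ : FTerm F V ar} {w : Pos} {s : F ⊕ V}
    (h : ℓ.val w = some s) : w.length < ℓ.depth := by
  induction w generalizing ℓ with
  | nil =>
    cases ℓ <;> simp [FTerm.depth]
  | cons j w' ih =>
    cases ℓ with
    | var x => cases h
    | app g ts =>
      simp only [FTerm.val] at h
      split at h
      · have := ih h
        have hle : (ts ⟨j - 1, by omega⟩).depth ≤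
            Finset.univ.sup fun i : Fin (ar g) => (ts i).depth :=
          Finset.le_sup (f := fun i : Fin (ar g) => (ts i).depth) (Finset.mem_univ _)
        simp only [List.length_cons, FTerm.depth]
        omega
      · cases h

theorem exists_depth_bound (S : ITRS F V ar) :
    ∃ D : ℕ, 1 ≤ D ∧ ∀ ρ w s, (S.lhs ρ).val w = some s → w.length + 1 ≤ D := by
  haveI := S.finR
  obtain ⟨B, hB⟩ := Set.Finite.bddAbove (Set.finite_range fun ρ => (S.lhs ρ).depth)
  refine ⟨B + 1, by omega, fun ρ w s h => ?_⟩
  have h1 : w.length < (S.lhs ρ).depth := FTerm.lt_depth h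
  have h2 : (S.lhs ρ).depth ≤ B := hB ⟨ρ, rfl⟩
  omega

/-! ### Subtrees -/

def subtreeAt (t : Term F V ar) (r : Pos) (h : (t.val r).isSome) : Term F V ar where
  val q := t.val (r ++ q)
  root_isSome := by simpa using h
  node p i := by
    rw [← List.append_assoc]
    exact t.node (r ++ p) i

@[simp] theorem subtreeAt_val (t : Term F V ar) (r : Pos) (h) (q : Pos) :
    (subtreeAt t r h).val q = t.val (r ++ q) := rfl

/-! ### Variable decompositions and canonical instances -/

theorem varDecomp_unique {u : Term F V ar} {w w₁ w₂ w₁' w₂' : Pos} {x x' : V}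
    (h : w = w₁ ++ w₂) (hx : u.val w₁ = some (Sum.inr x))
    (h' : w = w₁' ++ w₂') (hx' : u.val w₁' = some (Sum.inr x')) :
    w₁ = w₁' ∧ w₂ = w₂' ∧ x = x' := by
  have heq : w₁ = w₁' := by
    rcases prefix_comparable ⟨w₂, h.symm⟩ ⟨w₂', h'.symm⟩ with hp | hp
    · by_contra hne; exact var_pos_not_prefix hx hx' hne hp
    · by_contra hne; exact var_pos_not_prefix hx' hx (Ne.symm hne) hp
  subst heq
  have h2 : w₂ = w₂' := by
    apply List.append_cancel_left (as := w₁); rw [← h, ← h']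
  subst h2
  refine ⟨rfl, rfl, ?_⟩
  rw [hx] at hx'
  exact Sum.inr.inj (Option.some.inj hx')

theorem no_varDecomp_of_inl {u : Term F V ar} {w : Pos} {f : F}
    (h : u.val w = some (Sum.inl f)) :
    ¬ ∃ (x : V) (w₁ w₂ : Pos), w = w₁ ++ w₂ ∧ u.val w₁ = some (Sum.inr x) := by
  rintro ⟨x, w₁, w₂, rfl, hx⟩
  rcases eq_or_ne w₂ [] with rfl | hne
  · rw [List.append_nil] at h; rw [h] at hx; cases hx
  · rw [Term.not_isSome_below_var hx hne] at h; cases h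

open Classical in
noncomputable def instVal (σ : V → Term F V ar) (u : Term F V ar) (w : Pos) :
    Option (F ⊕ V) :=
  if h : ∃ (x : V) (w₁ w₂ : Pos), w = w₁ ++ w₂ ∧ u.val w₁ = some (Sum.inr x) then
    (σ h.choose).val h.choose_spec.choose_spec.choose
  else u.val w

theorem instVal_eq_of {σ : V → Term F V ar} {u : Term F V ar} {w w₁ w₂ : Pos} {x : V}
    (h1 : w = w₁ ++ w₂) (h2 : u.val w₁ = some (Sum.inr x)) :
    instVal σ u w = (σ x).val w₂ := by
  have hex : ∃ (x : V) (w₁ w₂ : Pos), w = w₁ ++ w₂ ∧ u.val w₁ = some (Sum.inr x) :=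
    ⟨x, w₁, w₂, h1, h2⟩
  rw [instVal, dif_pos hex]
  obtain ⟨-, h1', h2'⟩ := varDecomp_unique
    hex.choose_spec.choose_spec.choose_spec.1
    hex.choose_spec.choose_spec.choose_spec.2 h1 h2
  rw [h1', h2']

theorem instVal_eq_of_not {σ : V → Term F V ar} {u : Term F V ar} {w : Pos}
    (h : ¬ ∃ (x : V) (w₁ w₂ : Pos), w = w₁ ++ w₂ ∧ u.val w₁ = some (Sum.inr x)) :
    instVal σ u w = u.val w := dif_neg h

theorem instVal_nil_isSome {σ : V → Term F V ar} {u : Term F V ar} :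
    (instVal σ u []).isSome := by
  have hs := u.root_isSome
  rw [Option.isSome_iff_exists] at hs
  obtain ⟨s, hs⟩ := hs
  cases s with
  | inl f => rw [instVal_eq_of_not (no_varDecomp_of_inl hs), hs]; rfl
  | inr x =>
    rw [instVal_eq_of (w := []) (w₁ := []) (w₂ := []) rfl hs]
    exact (σ x).root_isSome

noncomputable def instTerm (σ : V → Term F V ar) (u : Term F V ar) : Term F V ar where
  val := instVal σ u
  root_isSome := instVal_nil_isSome
  node p i := by
    by_cases hd : ∃ (x : V) (w₁ w₂ : Pos), p = w₁ ++ w₂ ∧ u.val w₁ = some (Sum.inr x)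
    · obtain ⟨x, w₁, w₂, rfl, hx⟩ := hd
      rw [instVal_eq_of (List.append_assoc _ _ _) hx, instVal_eq_of rfl hx]
      exact (σ x).node w₂ i
    · rw [instVal_eq_of_not hd]
      by_cases hd2 : ∃ (x : V) (w₁ w₂ : Pos),
          p ++ [i] = w₁ ++ w₂ ∧ u.val w₁ = some (Sum.inr x)
      · obtain ⟨x, w₁, w₂, h1, hx⟩ := hd2
        have hw1 : w₁ = p ++ [i] := by
          have hpre : w₁ <+: p ++ [i] := ⟨w₂, h1.symm⟩
          by_contra hne
          have hlen : w₁.length ≤ p.length := by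
            have := hpre.length_le
            simp only [List.length_append, List.length_singleton] at this
            rcases Nat.lt_or_ge w₁.length (p.length + 1) with h' | h'
            · omega
            · exact absurd (List.IsPrefix.eq_of_length_le hpre (by simpa using h')) hne
          have hw1p : w₁ <+: p :=
            List.prefix_of_prefix_length_le hpre (List.prefix_append p [i]) hlen
          obtain ⟨v, rfl⟩ := hw1p
          exact hd ⟨x, w₁, v, rfl, hx⟩
        subst hw1
        have hw2 : w₂ = [] := by
          have := congrArg List.length h1
          simp only [List.length_append, List.length_singleton] at this
          rcases w₂ with _ | ⟨a, w₂⟩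
          · rfl
          · simp at this
        subst hw2
        rw [instVal_eq_of h1 hx]
        have hiff := (u.node p i).mp (by rw [hx]; rfl)
        constructor
        · intro _; exact hiff
        · intro _; exact (σ x).root_isSome
      · rw [instVal_eq_of_not hd2]
        exact u.node p i

noncomputable def mkResult (t : Term F V ar) (q : Pos) (σ : V → Term F V ar)
    (u : Term F V ar) (hq : (t.val q).isSome) : Term F V ar where
  val r := if q <+: r then instVal σ u (r.drop q.length) else t.val r
  root_isSome := by
    by_cases h : q <+: ([] : Pos)
    · have : q = [] := List.prefix_nil.mp h
      subst this
      rw [if_pos h]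
      exact instVal_nil_isSome
    · rw [if_neg h]
      exact t.root_isSome
  node p i := by
    by_cases h1 : q <+: p
    · obtain ⟨w, rfl⟩ := h1
      have h2 : q <+: q ++ w ++ [i] := by
        rw [List.append_assoc]; exact List.prefix_append _ _
      rw [if_pos h2, if_pos (List.prefix_append q w)]
      have hd1 : (q ++ w ++ [i]).drop q.length = w ++ [i] := by
        rw [List.append_assoc, List.drop_left]
      have hd2 : (q ++ w).drop q.length = w := List.drop_left
      rw [hd1, hd2]
      exact (instTerm σ u).node w i
    · by_cases h2 : q <+: p ++ [i]
      · have hq' : q = p ++ [i] := by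
          by_contra hne
          have hlen : q.length ≤ p.length := by
            have := h2.length_le
            simp only [List.length_append, List.length_singleton] at this
            rcases Nat.lt_or_ge q.length (p.length + 1) with h' | h'
            · omega
            · exact absurd (List.IsPrefix.eq_of_length_le h2 (by simpa using h')) hne
          exact h1 (List.prefix_of_prefix_length_le h2 (List.prefix_append p [i]) hlen)
        rw [if_pos h2, if_neg h1]
        have hdrop : (p ++ [i]).drop q.length = [] := by
          rw [hq']; simp
        rw [hdrop]
        have hL : (instVal σ u ([] : Pos)).isSome := instVal_nil_isSome
        have hR : ∃ f, t.val p = some (Sum.inl f) ∧ 1 ≤ i ∧ i ≤ ar f :=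
          (t.node p i).mp (hq' ▸ hq)
        simp only [hL, true_iff]
        exact hR
      · rw [if_neg h2, if_neg h1]
        exact t.node p i

theorem mkResult_val_of_prefix (t : Term F V ar) (q : Pos) (σ : V → Term F V ar)
    (u : Term F V ar) (hq) (w : Pos) :
    (mkResult t q σ u hq).val (q ++ w) = instVal σ u w := by
  show (if q <+: q ++ w then instVal σ u ((q ++ w).drop q.length) else _) = _
  rw [if_pos (List.prefix_append q w), List.drop_left]

theorem mkResult_val_of_not_prefix (t : Term F V ar) (q : Pos) (σ : V → Term F V ar)
    (u : Term F V ar) (hq) {r : Pos} (h : ¬ q <+: r) :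
    (mkResult t q σ u hq).val r = t.val r := if_neg h

/-! ### Facts about rewrite steps -/

theorem lhs_root (S : ITRS F V ar) (ρ : S.R) :
    ∃ f, (S.lhs ρ).val [] = some (Sum.inl f) := by
  cases hℓ : S.lhs ρ with
  | var x => exact absurd hℓ (S.lhs_not_var ρ x)
  | app f ts => exact ⟨f, rfl⟩

variable {S : ITRS F V ar}

theorem matchesAt_root_isSome {ℓ : FTerm F V ar} {σ : V → Term F V ar}
    {t : Term F V ar} {q : Pos} (hm : MatchesAt ℓ σ t q) {f : F}
    (hr : ℓ.val [] = some (Sum.inl f)) : (t.val q).isSome := by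
  have h := hm.1 [] f hr
  rw [List.append_nil] at h
  rw [h]; rfl

theorem stepRedex_exists {t : Term F V ar} {q : Pos} {ρ : S.R} {σ : V → Term F V ar}
    (hm : MatchesAt (S.lhs ρ) σ t q) : ∃ t', StepRedex S ⟨q, ρ⟩ t t' := by
  refine ⟨mkResult t q σ (S.rhs ρ)
    (matchesAt_root_isSome hm (lhs_root S ρ).choose_spec), σ, hm, ⟨?_, ?_⟩, ?_⟩
  · intro w f hw
    rw [mkResult_val_of_prefix, instVal_eq_of_not (no_varDecomp_of_inl hw), hw]
  · intro w x hw v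
    rw [List.append_assoc, mkResult_val_of_prefix, instVal_eq_of rfl hw]
  · intro r hr
    exact mkResult_val_of_not_prefix _ _ _ _ _ hr

section StepFacts

variable {t t' : Term F V ar} {q : Pos} {ρ : S.R}

theorem step_outside (hs : StepRedex S ⟨q, ρ⟩ t t') {r : Pos} (hr : ¬ q <+: r) :
    t'.val r = t.val r := hs.choose_spec.2.2 r hr

theorem step_inl (hs : StepRedex S ⟨q, ρ⟩ t t') {w : Pos} {f : F}
    (hw : (S.rhs ρ).val w = some (Sum.inl f)) :
    t'.val (q ++ w) = some (Sum.inl f) := hs.choose_spec.2.1.1 w f hw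

theorem step_var (hs : StepRedex S ⟨q, ρ⟩ t t') {w₁ : Pos} {x : V}
    (hw : (S.rhs ρ).val w₁ = some (Sum.inr x)) {q₁ : Pos}
    (hq₁ : (S.lhs ρ).val q₁ = some (Sum.inr x)) (w₂ : Pos) :
    t'.val (q ++ w₁ ++ w₂) = t.val (q ++ q₁ ++ w₂) := by
  obtain ⟨σ, hm, hi, ho⟩ := hs
  rw [hi.2 w₁ x hw w₂, hm.2 q₁ x hq₁ w₂]

theorem step_source_isSome (hs : StepRedex S ⟨q, ρ⟩ t t') : (t.val q).isSome :=
  matchesAt_root_isSome hs.choose_spec.1 (lhs_root S ρ).choose_spec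

theorem step_defined (hs : StepRedex S ⟨q, ρ⟩ t t') {w : Pos}
    (hsome : (t'.val (q ++ w)).isSome) :
    (∃ (x : V) (w₁ w₂ : Pos), w = w₁ ++ w₂ ∧ (S.rhs ρ).val w₁ = some (Sum.inr x)) ∨
      ((S.rhs ρ).val w).isSome := by
  induction w using List.reverseRecOn with
  | nil => exact Or.inr (S.rhs ρ).root_isSome
  | append_singleton a i ih =>
    have ha : (t'.val (q ++ a)).isSome :=
      Term.prefix_isSome hsome
        (by rw [← List.append_assoc]; exact List.prefix_append _ _)
    rcases ih ha with hd | hr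
    · obtain ⟨x, w₁, w₂, rfl, hx⟩ := hd
      exact Or.inl ⟨x, w₁, w₂ ++ [i], by rw [List.append_assoc], hx⟩
    · rw [Option.isSome_iff_exists] at hr
      obtain ⟨s, hsv⟩ := hr
      cases s with
      | inr x => exact Or.inl ⟨x, a, [i], rfl, hsv⟩
      | inl f =>
        right
        have h1 : t'.val (q ++ a) = some (Sum.inl f) := step_inl hs hsv
        rw [← List.append_assoc] at hsome
        obtain ⟨f', hf', hb1, hb2⟩ := (t'.node (q ++ a) i).mp hsome
        rw [h1] at hf'
        obtain rfl : f = f' := Sum.inl.inj (Option.some.inj hf')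
        exact ((S.rhs ρ).node a i).mpr ⟨f, hsv, hb1, hb2⟩

theorem step_none (hs : StepRedex S ⟨q, ρ⟩ t t') {w : Pos}
    (hd : ¬ ∃ (x : V) (w₁ w₂ : Pos), w = w₁ ++ w₂ ∧ (S.rhs ρ).val w₁ = some (Sum.inr x))
    (hn : (S.rhs ρ).val w = none) : t'.val (q ++ w) = none := by
  by_contra h
  rcases step_defined hs (Option.isSome_iff_ne_none.mpr h) with h1 | h2
  · exact hd h1
  · rw [hn] at h2; cases h2

end StepFacts

theorem stepRedex_unique {t t₁ t₂ : Term F V ar} {q : Pos} {ρ : S.R}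
    (h1 : StepRedex S ⟨q, ρ⟩ t t₁) (h2 : StepRedex S ⟨q, ρ⟩ t t₂) : t₁ = t₂ := by
  apply Term.ext'
  intro r
  by_cases hq : q <+: r
  · obtain ⟨w, rfl⟩ := hq
    by_cases hd : ∃ (x : V) (w₁ w₂ : Pos),
        w = w₁ ++ w₂ ∧ (S.rhs ρ).val w₁ = some (Sum.inr x)
    · obtain ⟨x, w₁, w₂, rfl, hx⟩ := hd
      obtain ⟨q₁, hq₁⟩ := S.var_cond ρ x w₁ hx
      rw [← List.append_assoc, step_var h1 hx hq₁ w₂, step_var h2 hx hq₁ w₂]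
    · rcases hv : (S.rhs ρ).val w with _ | s
      · rw [step_none h1 hd hv, step_none h2 hd hv]
      · cases s with
        | inl f => rw [step_inl h1 hv, step_inl h2 hv]
        | inr x => exact absurd ⟨x, w, [], by simp, hv⟩ hd
  · rw [step_outside h1 hq, step_outside h2 hq]

theorem stepRedex_agree {D : ℕ}
    (hD : ∀ (ρ : S.R) (w : Pos) s, (S.lhs ρ).val w = some s → w.length + 1 ≤ D)
    {t s t' s' : Term F V ar} {q : Pos} {ρ : S.R} {L : ℕ}
    (hts : ∀ r : Pos, r.length ≤ L → t.val r = s.val r)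
    (h1 : StepRedex S ⟨q, ρ⟩ t t') (h2 : StepRedex S ⟨q, ρ⟩ s s')
    {r : Pos} (hr : r.length + D ≤ L + 1) : t'.val r = s'.val r := by
  have hD1 : 1 ≤ D := by
    obtain ⟨f₀, h₀⟩ := lhs_root S ρ
    simpa using hD ρ [] _ h₀
  by_cases hq : q <+: r
  · obtain ⟨w, rfl⟩ := hq
    by_cases hd : ∃ (x : V) (w₁ w₂ : Pos),
        w = w₁ ++ w₂ ∧ (S.rhs ρ).val w₁ = some (Sum.inr x)
    · obtain ⟨x, w₁, w₂, rfl, hx⟩ := hd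
      obtain ⟨q₁, hq₁⟩ := S.var_cond ρ x w₁ hx
      rw [← List.append_assoc, step_var h1 hx hq₁ w₂, step_var h2 hx hq₁ w₂]
      apply hts
      have hq₁len : q₁.length + 1 ≤ D := hD ρ q₁ _ hq₁
      simp only [List.length_append] at hr ⊢
      omega
    · rcases hv : (S.rhs ρ).val w with _ | s
      · rw [step_none h1 hd hv, step_none h2 hd hv]
      · cases s with
        | inl f => rw [step_inl h1 hv, step_inl h2 hv]
        | inr x => exact absurd ⟨x, w, [], by simp, hv⟩ hd
  · rw [step_outside h1 hq, step_outside h2 hq]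
    apply hts
    omega

theorem matchesAt_transfer (hll : LeftLinear S) {t s : Term F V ar} {q : Pos}
    {ρ : S.R} {σ : V → Term F V ar} (hm : MatchesAt (S.lhs ρ) σ t q)
    (hagree : ∀ q' : Pos, ((S.lhs ρ).val q').isSome →
      s.val (q ++ q') = t.val (q ++ q')) :
    ∃ σ', MatchesAt (S.lhs ρ) σ' s q := by
  classical
  refine ⟨fun x =>
    if h : ∃ q₁, (S.lhs ρ).val q₁ = some (Sum.inr x) ∧ (s.val (q ++ q₁)).isSome
    then subtreeAt s (q ++ h.choose) h.choose_spec.2 else σ x, ?_, ?_⟩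
  · intro q' f hq'
    rw [hagree q' (by rw [hq']; rfl)]
    exact hm.1 q' f hq'
  · intro q' x hq'
    have hsome : (s.val (q ++ q')).isSome := by
      rw [hagree q' (by rw [hq']; rfl)]
      have h := hm.2 q' x hq' []
      rw [List.append_nil] at h
      rw [h]
      exact (σ x).root_isSome
    have hex : ∃ q₁, (S.lhs ρ).val q₁ = some (Sum.inr x) ∧ (s.val (q ++ q₁)).isSome :=
      ⟨q', hq', hsome⟩
    dsimp only
    rw [dif_pos hex]
    have hc : hex.choose = q' := hll ρ hex.choose q' x hex.choose_spec.1 hq'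
    intro v
    show s.val ((q ++ q') ++ v) = s.val ((q ++ hex.choose) ++ v)
    rw [hc]

/-! ### Grafting -/

theorem prefix_concat_cases {a p : Pos} {i : ℕ} (h : a <+: p ++ [i]) :
    a <+: p ∨ a = p ++ [i] := by
  rcases le_or_gt a.length p.length with hl | hl
  · exact Or.inl (List.prefix_of_prefix_length_le h (List.prefix_append p [i]) hl)
  · right
    apply List.IsPrefix.eq_of_length_le h
    have := h.length_le
    simp only [List.length_append, List.length_singleton] at this ⊢
    omega

open Classical in
noncomputable def graftVal (t : Term F V ar) (P : Pos → Prop) (u : Term F V ar)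
    (r : Pos) : Option (F ⊕ V) :=
  if h : ∃ a, P a ∧ a <+: r then u.val (r.drop h.choose.length) else t.val r

theorem graftVal_eq_of {t : Term F V ar} {P : Pos → Prop} {u : Term F V ar}
    (hP : ∀ c d, P c → P d → c ≠ d → ¬ c <+: d) {a r : Pos}
    (ha : P a) (hpre : a <+: r) :
    graftVal t P u r = u.val (r.drop a.length) := by
  have hex : ∃ a, P a ∧ a <+: r := ⟨a, ha, hpre⟩
  rw [graftVal, dif_pos hex]
  have hc : hex.choose = a := by
    by_contra hne
    rcases prefix_comparable hex.choose_spec.2 hpre with h | h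
    · exact hP _ _ hex.choose_spec.1 ha hne h
    · exact hP _ _ ha hex.choose_spec.1 (Ne.symm hne) h
  rw [hc]

theorem graftVal_eq_of_not {t : Term F V ar} {P : Pos → Prop} {u : Term F V ar}
    {r : Pos} (h : ¬ ∃ a, P a ∧ a <+: r) : graftVal t P u r = t.val r :=
  dif_neg h

noncomputable def graftTerm (t : Term F V ar) (P : Pos → Prop) (u : Term F V ar)
    (hP : ∀ c d, P c → P d → c ≠ d → ¬ c <+: d)
    (hdef : ∀ a, P a → (t.val a).isSome) : Term F V ar where
  val := graftVal t P u
  root_isSome := by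
    by_cases h : ∃ a, P a ∧ a <+: ([] : Pos)
    · obtain ⟨a, ha, hpre⟩ := h
      have : a = [] := List.prefix_nil.mp hpre
      subst this
      rw [graftVal_eq_of hP ha (List.nil_prefix)]
      exact u.root_isSome
    · rw [graftVal_eq_of_not h]
      exact t.root_isSome
  node p i := by
    by_cases h1 : ∃ a, P a ∧ a <+: p
    · obtain ⟨a, ha, w, rfl⟩ := h1
      have hpre2 : a <+: a ++ w ++ [i] := by
        rw [List.append_assoc]; exact List.prefix_append _ _
      rw [graftVal_eq_of hP ha hpre2, graftVal_eq_of hP ha (List.prefix_append a w)]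
      have hd1 : (a ++ w ++ [i]).drop a.length = w ++ [i] := by
        rw [List.append_assoc, List.drop_left]
      rw [hd1, List.drop_left]
      exact u.node w i
    · by_cases h2 : ∃ a, P a ∧ a <+: p ++ [i]
      · obtain ⟨a, ha, hpre⟩ := h2
        rcases prefix_concat_cases hpre with hc | rfl
        · exact absurd ⟨a, ha, hc⟩ h1
        · rw [graftVal_eq_of hP ha (List.prefix_refl _), graftVal_eq_of_not h1]
          rw [List.drop_length]
          have hL : (u.val []).isSome := u.root_isSome
          have hR : ∃ f, t.val p = some (Sum.inl f) ∧ 1 ≤ i ∧ i ≤ ar f :=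
            (t.node p i).mp (hdef _ ha)
          constructor
          · intro _; exact hR
          · intro _; exact hL
      · rw [graftVal_eq_of_not h2, graftVal_eq_of_not h1]
        exact t.node p i

theorem graftTerm_val (t : Term F V ar) (P : Pos → Prop) (u : Term F V ar)
    (hP) (hdef) (r : Pos) :
    (graftTerm t P u hP hdef).val r = graftVal t P u r := rfl

/-! ### Localization of steps -/

theorem list_prefix_append_iff {a b v : Pos} : a ++ b <+: a ++ v ↔ b <+: v := by
  constructor
  · rintro ⟨w, hw⟩
    rw [List.append_assoc] at hw
    exact ⟨w, List.append_cancel_left hw⟩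
  · rintro ⟨w, rfl⟩
    exact ⟨w, by rw [List.append_assoc]⟩

theorem step_target_pos_isSome {t t₂ : Term F V ar} {r : Pos} {ρ₂ : S.R}
    (hstep : StepRedex S ⟨r, ρ₂⟩ t t₂) {a : Pos} (ha : a <+: r)
    (h : (t.val a).isSome) : (t₂.val a).isSome := by
  rcases eq_or_ne a r with rfl | hne
  · have hs := (S.rhs ρ₂).root_isSome
    rw [Option.isSome_iff_exists] at hs
    obtain ⟨s, hs⟩ := hs
    cases s with
    | inl f =>
      have := step_inl hstep hs
      rw [List.append_nil] at this
      rw [this]; rfl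
    | inr x =>
      obtain ⟨q₁, hq₁⟩ := S.var_cond ρ₂ x [] hs
      have hv := step_var hstep hs hq₁ []
      simp only [List.append_nil] at hv
      obtain ⟨σ, hm, -, -⟩ := hstep
      have hsub : t.val (a ++ q₁) = (σ x).val [] := by
        have h := hm.2 q₁ x hq₁ []
        simp only [List.append_nil] at h
        exact h
      rw [show t₂.val a = t.val (a ++ q₁) from hv, hsub]
      exact (σ x).root_isSome
  · have hnp : ¬ r <+: a := by
      intro hra
      exact hne (List.IsPrefix.eq_of_length_le ha hra.length_le)
    rw [step_outside hstep hnp]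
    exact h

theorem subtree_step {t t₂ : Term F V ar} {a b : Pos} {ρ₂ : S.R}
    (hstep : StepRedex S ⟨a ++ b, ρ₂⟩ t t₂) (hdefa : (t.val a).isSome)
    (hdefa₂ : (t₂.val a).isSome) :
    StepRedex S ⟨b, ρ₂⟩ (subtreeAt t a hdefa) (subtreeAt t₂ a hdefa₂) := by
  obtain ⟨σ, hm, hi, ho⟩ := hstep
  refine ⟨σ, ⟨?_, ?_⟩, ⟨?_, ?_⟩, ?_⟩
  · intro w f hw
    have h : t.val ((a ++ b) ++ w) = some (Sum.inl f) := hm.1 w f hw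
    show t.val (a ++ (b ++ w)) = some (Sum.inl f)
    rw [← List.append_assoc]
    exact h
  · intro w x hw v
    have h : t.val (((a ++ b) ++ w) ++ v) = (σ x).val v := hm.2 w x hw v
    show t.val (a ++ ((b ++ w) ++ v)) = (σ x).val v
    rw [← List.append_assoc, ← List.append_assoc]
    exact h
  · intro w f hw
    have h : t₂.val ((a ++ b) ++ w) = some (Sum.inl f) := hi.1 w f hw
    show t₂.val (a ++ (b ++ w)) = some (Sum.inl f)
    rw [← List.append_assoc]
    exact h
  · intro w x hw v
    have h : t₂.val (((a ++ b) ++ w) ++ v) = (σ x).val v := hi.2 w x hw v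
    show t₂.val (a ++ ((b ++ w) ++ v)) = (σ x).val v
    rw [← List.append_assoc, ← List.append_assoc]
    exact h
  · intro v hv
    show t₂.val (a ++ v) = t.val (a ++ v)
    exact ho (a ++ v) (fun hc => hv (list_prefix_append_iff.mp hc))

/-! ### Agreement -/

theorem agreeUpTo_mono {k k' : ℕ} (h : k' ≤ k) {s t : Term F V ar}
    (ha : AgreeUpTo k s t) : AgreeUpTo k' s t :=
  fun r hr => ha r (le_trans hr h)

theorem agreeUpTo_trans {k : ℕ} {s t u : Term F V ar}
    (h1 : AgreeUpTo k s t) (h2 : AgreeUpTo k t u) : AgreeUpTo k s u :=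
  fun r hr => (h1 r hr).trans (h2 r hr)

theorem agreeUpTo_symm {k : ℕ} {s t : Term F V ar} (h : AgreeUpTo k s t) :
    AgreeUpTo k t s := fun r hr => (h r hr).symm

/-! ### Finite reductions -/

inductive FinRed (S : ITRS F V ar) : Term F V ar → Term F V ar → Type where
  | nil (t) : FinRed S t t
  | cons {t t' u} (q : Pos) (ρ : S.R) (h : StepRedex S ⟨q, ρ⟩ t t')
      (rest : FinRed S t' u) : FinRed S t u

def FinRed.length : ∀ {t u}, FinRed S t u → ℕ
  | _, _, .nil _ => 0
  | _, _, .cons _ _ _ rest => rest.length + 1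

def FinRed.maxDepth : ∀ {t u}, FinRed S t u → ℕ
  | _, _, .nil _ => 0
  | _, _, .cons q _ _ rest => max q.length rest.maxDepth

def FinRed.append : ∀ {t v u}, FinRed S t v → FinRed S v u → FinRed S t u
  | _, _, _, .nil _, R2 => R2
  | _, _, _, .cons q ρ h rest, R2 => .cons q ρ h (rest.append R2)

/-! ### Inductive strongly convergent reductions (depth-indexed) -/

inductive SCRed (S : ITRS F V ar) : ℕ → Term F V ar → Term F V ar → Type where
  | nil (d t) : SCRed S d t t
  | cons {d : ℕ} {t t' u : Term F V ar} (q : Pos) (ρ : S.R) (hd : d ≤ q.length)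
      (h : StepRedex S ⟨q, ρ⟩ t t') (rest : SCRed S d t' u) : SCRed S d t u
  | limCons {d : ℕ} {w u : Term F V ar} (g : ℕ → Term F V ar)
      (pieces : ∀ n, SCRed S (max d n) (g n) (g (n + 1)))
      (hconv : ∀ n, AgreeUpTo n (g n) w)
      (rest : SCRed S d w u) : SCRed S d (g 0) u

def SCRed.weaken : ∀ {d d' t u}, d' ≤ d → SCRed S d t u → SCRed S d' t u
  | _, _, _, _, _, .nil _ _ => .nil _ _
  | _, _, _, _, h, .cons q ρ hd hs rest =>
      .cons q ρ (le_trans h hd) hs (rest.weaken h)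
  | _, _, _, _, h, .limCons g pieces hconv rest =>
      .limCons g (fun n => (pieces n).weaken (max_le_max h (le_refl n))) hconv
        (rest.weaken h)

def SCRed.concat : ∀ {d t v u}, SCRed S d t v → SCRed S d v u → SCRed S d t u
  | _, _, _, _, .nil _ _, R2 => R2
  | _, _, _, _, .cons q ρ hd hs rest, R2 => .cons q ρ hd hs (rest.concat R2)
  | _, _, _, _, .limCons g pieces hconv rest, R2 =>
      .limCons g pieces hconv (rest.concat R2)

def FinRed.toSCRed : ∀ {t u}, FinRed S t u → SCRed S 0 t u
  | _, _, .nil _ => .nil _ _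
  | _, _, .cons q ρ h rest => .cons q ρ (Nat.zero_le _) h rest.toSCRed

/-- Endpoints of a `d`-deep strongly convergent reduction agree strictly below
depth `d`. -/
theorem SCRed.agree : ∀ {d : ℕ} {t u : Term F V ar}, SCRed S d t u →
    ∀ r : Pos, r.length < d → t.val r = u.val r := by
  intro d t u R
  induction R with
  | nil => intro r hr; rfl
  | cons q ρ hd hs rest ih =>
    intro r hr
    have hnp : ¬ q <+: r := by
      intro hpre
      have := hpre.length_le
      omega
    rw [← step_outside hs hnp]
    exact ih r hr
  | limCons g pieces hconv rest ihp ihr =>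
    intro r hr
    have hg : ∀ n, (g 0).val r = (g n).val r := by
      intro n
      induction n with
      | zero => rfl
      | succ m ihm =>
        rw [ihm]
        exact ihp m r (lt_of_lt_of_le hr (le_max_left _ _))
    rw [hg (r.length + 1), hconv (r.length + 1) r (by omega)]
    exact ihr r hr

/-- The tail of a limit: from `g j` on, the reduction is `max d j`-deep. -/
def SCRed.limTail {d : ℕ} {w : Term F V ar} (g : ℕ → Term F V ar)
    (pieces : ∀ n, SCRed S (max d n) (g n) (g (n + 1)))
    (hconv : ∀ n, AgreeUpTo n (g n) w) (j : ℕ) :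
    SCRed S (max d j) (g j) w :=
  .limCons (fun n => g (j + n))
    (fun n => (pieces (j + n)).weaken (by omega))
    (fun n => agreeUpTo_mono (by omega) (hconv (j + n)))
    (.nil _ _)

/-! ### More auxiliary lemmas -/

theorem FTerm.below_var {ℓ : FTerm F V ar} {q₁ : Pos} {x : V}
    (h : ℓ.val q₁ = some (Sum.inr x)) {w : Pos} (hw : w ≠ []) :
    ℓ.val (q₁ ++ w) = none := by
  induction q₁ generalizing ℓ with
  | nil =>
    cases ℓ with
    | var y =>
      cases w with
      | nil => exact absurd rfl hw
      | cons i w' => rfl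
    | app f ts => cases h
  | cons i q₁' ih =>
    cases ℓ with
    | var y => cases h
    | app f ts =>
      simp only [FTerm.val] at h
      rw [List.cons_append]
      simp only [FTerm.val]
      split at h
      · rw [dif_pos ‹_›]
        exact ih h
      · cases h

theorem FTerm.var_not_prefix {ℓ : FTerm F V ar} {p q : Pos} {x y : V}
    (hp : ℓ.val p = some (Sum.inr x)) (hq : ℓ.val q = some (Sum.inr y))
    (hne : p ≠ q) : ¬ p <+: q := by
  rintro ⟨w, rfl⟩
  have hw : w ≠ [] := by rintro rfl; exact hne (by simp)
  rw [FTerm.below_var hp hw] at hq; cases hq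

theorem match_exit_var {ℓ : FTerm F V ar} {σ : V → Term F V ar} {t : Term F V ar}
    {q : Pos} (hm : MatchesAt ℓ σ t q) {w : Pos}
    (hsome : (t.val (q ++ w)).isSome) :
    (∃ (x : V) (q₁ w₂ : Pos), w = q₁ ++ w₂ ∧ ℓ.val q₁ = some (Sum.inr x)) ∨
      (ℓ.val w).isSome := by
  induction w using List.reverseRecOn with
  | nil => exact Or.inr (FTerm.val_nil_isSome ℓ)
  | append_singleton a i ih =>
    have ha : (t.val (q ++ a)).isSome :=
      Term.prefix_isSome hsome
        (by rw [← List.append_assoc]; exact List.prefix_append _ _)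
    rcases ih ha with hd | hr
    · obtain ⟨x, q₁, w₂, rfl, hx⟩ := hd
      exact Or.inl ⟨x, q₁, w₂ ++ [i], by rw [List.append_assoc], hx⟩
    · rw [Option.isSome_iff_exists] at hr
      obtain ⟨s, hsv⟩ := hr
      cases s with
      | inr x => exact Or.inl ⟨x, a, [i], rfl, hsv⟩
      | inl f =>
        right
        have h1 : t.val (q ++ a) = some (Sum.inl f) := hm.1 a f hsv
        rw [← List.append_assoc] at hsome
        obtain ⟨f', hf', hb1, hb2⟩ := (t.node (q ++ a) i).mp hsome
        rw [h1] at hf'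
        obtain rfl : f = f' := Sum.inl.inj (Option.some.inj hf')
        exact FTerm.val_child hsv hb1 hb2

/-- Two steps with the same rule and position, whose sources agree on the
cone of the position, produce results agreeing on that cone. -/
theorem step_val_eq {t s t' s' : Term F V ar} {q : Pos} {ρ : S.R}
    (h1 : StepRedex S ⟨q, ρ⟩ t t') (h2 : StepRedex S ⟨q, ρ⟩ s s')
    (hts : ∀ v : Pos, t.val (q ++ v) = s.val (q ++ v)) {w : Pos} :
    t'.val (q ++ w) = s'.val (q ++ w) := by
  by_cases hd : ∃ (x : V) (w₁ w₂ : Pos),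
      w = w₁ ++ w₂ ∧ (S.rhs ρ).val w₁ = some (Sum.inr x)
  · obtain ⟨x, w₁, w₂, rfl, hx⟩ := hd
    obtain ⟨q₁, hq₁⟩ := S.var_cond ρ x w₁ hx
    rw [← List.append_assoc, step_var h1 hx hq₁ w₂, step_var h2 hx hq₁ w₂]
    rw [List.append_assoc]
    exact hts _
  · rcases hv : (S.rhs ρ).val w with _ | s0
    · rw [step_none h1 hd hv, step_none h2 hd hv]
    · cases s0 with
      | inl f => rw [step_inl h1 hv, step_inl h2 hv]
      | inr x => exact absurd ⟨x, w, [], by simp, hv⟩ hd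

/-! ### Graft term congruence -/

theorem graftTerm_congr {t : Term F V ar} {P P' : Pos → Prop} {u : Term F V ar}
    {hP hdef hP' hdef'} (hPP' : ∀ c, P c ↔ P' c) :
    graftTerm t P u hP hdef = graftTerm t P' u hP' hdef' := by
  apply Term.ext'
  intro r
  show graftVal t P u r = graftVal t P' u r
  by_cases h : ∃ a, P a ∧ a <+: r
  · obtain ⟨a, ha, hpre⟩ := h
    rw [graftVal_eq_of hP ha hpre, graftVal_eq_of hP' ((hPP' a).mp ha) hpre]
  · rw [graftVal_eq_of_not h, graftVal_eq_of_not (by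
      rintro ⟨a, ha, hpre⟩; exact h ⟨a, (hPP' a).mpr ha, hpre⟩)]

theorem graftTerm_empty {t : Term F V ar} {P : Pos → Prop} {u : Term F V ar}
    {hP hdef} (h0 : ∀ c, ¬ P c) : graftTerm t P u hP hdef = t := by
  apply Term.ext'
  intro r
  show graftVal t P u r = t.val r
  exact graftVal_eq_of_not (by rintro ⟨a, ha, -⟩; exact h0 a ha)

/-! ### Defined positions of bounded length -/

def posList (u : Term F V ar) : ℕ → List Pos
  | 0 => [[]]
  | n + 1 => (posList u n).flatMap fun p =>
      match u.val p with
      | some (Sum.inl f) => (List.range (ar f)).map fun i => p ++ [i + 1]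
      | _ => []

theorem posList_complete {u : Term F V ar} {p : Pos} (h : (u.val p).isSome) :
    p ∈ posList u p.length := by
  induction p using List.reverseRecOn with
  | nil => simp [posList]
  | append_singleton a i ih =>
    obtain ⟨f, hf, hb1, hb2⟩ := (u.node a i).mp h
    have ha : (u.val a).isSome := by rw [hf]; rfl
    have hmem := ih ha
    simp only [List.length_append, List.length_singleton]
    show a ++ [i] ∈ posList u (a.length + 1)
    rw [posList]
    rw [List.mem_flatMap]
    refine ⟨a, hmem, ?_⟩
    rw [hf]
    simp only [List.mem_map, List.mem_range]
    exact ⟨i - 1, by omega, by congr 1; simp; omega⟩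

theorem posList_length {u : Term F V ar} : ∀ {n : ℕ} {p : Pos},
    p ∈ posList u n → p.length = n := by
  intro n
  induction n with
  | zero => intro p hp; simp [posList] at hp; simp [hp]
  | succ m ih =>
    intro p hp
    rw [posList, List.mem_flatMap] at hp
    obtain ⟨a, ha, hmem⟩ := hp
    rcases hv : u.val a with _ | s
    · rw [hv] at hmem; cases hmem
    · cases s with
      | inl f =>
        rw [hv] at hmem
        simp only [List.mem_map, List.mem_range] at hmem
        obtain ⟨i, -, rfl⟩ := hmem
        simp [ih ha]
      | inr y => rw [hv] at hmem; cases hmem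

/-! ### Steps inside grafts -/

theorem graft_step {X sσ sσ' : Term F V ar} {b : Pos} {ρ₂ : S.R}
    (hinner : StepRedex S ⟨b, ρ₂⟩ sσ sσ')
    {P P' : Pos → Prop} {a : Pos} {hP : ∀ c d, P c → P d → c ≠ d → ¬ c <+: d}
    {hdef : ∀ c, P c → (X.val c).isSome}
    {hP' : ∀ c d, P' c → P' d → c ≠ d → ¬ c <+: d}
    {hdef' : ∀ c, P' c → (X.val c).isSome}
    (hPa : ∀ c, P c → ¬ c <+: a ∧ ¬ a <+: c)
    (hP'iff : ∀ c, P' c ↔ P c ∨ c = a)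
    (hsub : SubtreeEq X a sσ) :
    StepRedex S ⟨a ++ b, ρ₂⟩ (graftTerm X P sσ' hP hdef)
      (graftTerm X P' sσ' hP' hdef') := by
  obtain ⟨σᵢ, hmᵢ, hiᵢ, -⟩ := id hinner
  have hnoP : ∀ v : Pos, ¬ ∃ c, P c ∧ c <+: a ++ v := by
    rintro v ⟨c, hc, hpre⟩
    rcases prefix_comparable hpre (List.prefix_append a v) with h | h
    · exact (hPa c hc).1 h
    · exact (hPa c hc).2 h
  have hGP : ∀ v : Pos, (graftTerm X P sσ' hP hdef).val (a ++ v) = sσ.val v := by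
    intro v
    show graftVal X P sσ' (a ++ v) = _
    rw [graftVal_eq_of_not (hnoP v)]
    exact hsub v
  have haP' : P' a := (hP'iff a).mpr (Or.inr rfl)
  have hGP' : ∀ v : Pos,
      (graftTerm X P' sσ' hP' hdef').val (a ++ v) = sσ'.val v := by
    intro v
    show graftVal X P' sσ' (a ++ v) = _
    rw [graftVal_eq_of hP' haP' (List.prefix_append a v), List.drop_left]
  refine ⟨σᵢ, ⟨?_, ?_⟩, ⟨?_, ?_⟩, ?_⟩
  · intro w f hw
    have h : sσ.val (b ++ w) = some (Sum.inl f) := hmᵢ.1 w f hw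
    show (graftTerm X P sσ' hP hdef).val ((a ++ b) ++ w) = _
    rw [List.append_assoc, hGP (b ++ w)]
    exact h
  · intro w y hw v
    have h : sσ.val ((b ++ w) ++ v) = (σᵢ y).val v := hmᵢ.2 w y hw v
    have e1 : ((a ++ b) ++ w) ++ v = a ++ ((b ++ w) ++ v) := by
      simp [List.append_assoc]
    show (graftTerm X P sσ' hP hdef).val (((a ++ b) ++ w) ++ v) = _
    rw [e1, hGP ((b ++ w) ++ v)]
    exact h
  · intro w f hw
    have h : sσ'.val (b ++ w) = some (Sum.inl f) := hiᵢ.1 w f hw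
    show (graftTerm X P' sσ' hP' hdef').val ((a ++ b) ++ w) = _
    rw [List.append_assoc, hGP' (b ++ w)]
    exact h
  · intro w y hw v
    have h : sσ'.val ((b ++ w) ++ v) = (σᵢ y).val v := hiᵢ.2 w y hw v
    have e1 : ((a ++ b) ++ w) ++ v = a ++ ((b ++ w) ++ v) := by
      simp [List.append_assoc]
    show (graftTerm X P' sσ' hP' hdef').val (((a ++ b) ++ w) ++ v) = _
    rw [e1, hGP' ((b ++ w) ++ v)]
    exact h
  · intro rr hrr
    show graftVal X P' sσ' rr = graftVal X P sσ' rr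
    by_cases hc : ∃ c, P c ∧ c <+: rr
    · obtain ⟨c, hcP, hpre⟩ := hc
      rw [graftVal_eq_of hP' ((hP'iff c).mpr (Or.inl hcP)) hpre,
        graftVal_eq_of hP hcP hpre]
    · by_cases ha2 : a <+: rr
      · obtain ⟨v, rfl⟩ := ha2
        have hbv : ¬ b <+: v := fun hb => hrr (list_prefix_append_iff.mpr hb)
        rw [graftVal_eq_of hP' haP' (List.prefix_append a v), List.drop_left,
          graftVal_eq_of_not hc, hsub v]
        exact step_outside hinner hbv
      · rw [graftVal_eq_of_not (by
          rintro ⟨c, hcP', hpre⟩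
          rcases (hP'iff c).mp hcP' with h | rfl
          · exact hc ⟨c, h, hpre⟩
          · exact ha2 hpre), graftVal_eq_of_not hc]

noncomputable def graftE (X u' : Term F V ar) (E P : Pos → Prop)
    (hEinc : ∀ c d, E c → E d → c ≠ d → ¬ c <+: d)
    (hEdef : ∀ c, E c → (X.val c).isSome)
    (hPE : ∀ c, P c → E c) : Term F V ar :=
  graftTerm X P u' (fun c d hc hd' => hEinc c d (hPE c hc) (hPE d hd'))
    (fun a ha => hEdef a (hPE a ha))

theorem graftE_congr {X u' : Term F V ar} {E P P' : Pos → Prop}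
    {hEinc hEdef hPE hP'E} (h : ∀ c, P c ↔ P' c) :
    graftE X u' E P hEinc hEdef hPE = graftE X u' E P' hEinc hEdef hP'E :=
  graftTerm_congr h

theorem graft_chain {X sσ sσ' : Term F V ar} {b : Pos} {ρ₂ : S.R}
    (hinner : StepRedex S ⟨b, ρ₂⟩ sσ sσ')
    {E : Pos → Prop}
    (hEinc : ∀ c d, E c → E d → c ≠ d → ¬ c <+: d)
    (hEdef : ∀ c, E c → (X.val c).isSome)
    (hEsub : ∀ c, E c → SubtreeEq X c sσ)
    (d : ℕ) :
    ∀ (L : List Pos), L.Nodup → (∀ c ∈ L, E c) →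
      (∀ c ∈ L, d ≤ c.length + b.length) →
      ∀ (P₀ : Pos → Prop) (hP₀E : ∀ c, P₀ c → E c), (∀ c ∈ L, ¬ P₀ c) →
      ∀ (hP₁E : ∀ c, (P₀ c ∨ c ∈ L) → E c),
      Nonempty (SCRed S d (graftE X sσ' E P₀ hEinc hEdef hP₀E)
        (graftE X sσ' E (fun c => P₀ c ∨ c ∈ L) hEinc hEdef hP₁E)) := by
  intro L
  induction L with
  | nil =>
    intro _ _ _ P₀ hP₀E _ hP₁E
    refine ⟨?_⟩
    rw [show graftE X sσ' E (fun c => P₀ c ∨ c ∈ ([] : List Pos)) hEinc hEdef hP₁E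
      = graftE X sσ' E P₀ hEinc hEdef hP₀E from graftE_congr (by simp)]
    exact SCRed.nil d _
  | cons a L' ih =>
    intro hnd hmem hlen P₀ hP₀E hnot hP₁E
    have haE : E a := hmem a (List.mem_cons_self)
    have hstep : StepRedex S ⟨a ++ b, ρ₂⟩
        (graftE X sσ' E P₀ hEinc hEdef hP₀E)
        (graftE X sσ' E (fun c => P₀ c ∨ c = a) hEinc hEdef
          (fun c hc => hc.elim (hP₀E c) (fun h => h ▸ haE))) := by
      apply graft_step hinner
      · intro c hc
        have hcE : E c := hP₀E c hc
        have hne : c ≠ a := fun h => hnot a (List.mem_cons_self) (h ▸ hc)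
        exact ⟨hEinc c a hcE haE hne, hEinc a c haE hcE (Ne.symm hne)⟩
      · intro c; exact Iff.rfl
      · exact hEsub a haE
    obtain ⟨R'⟩ := ih hnd.of_cons (fun c hc => hmem c (List.mem_cons_of_mem a hc))
      (fun c hc => hlen c (List.mem_cons_of_mem a hc))
      (fun c => P₀ c ∨ c = a)
      (fun c hc => hc.elim (hP₀E c) (fun h => h ▸ haE))
      (fun c hc hPc => hPc.elim (hnot c (List.mem_cons_of_mem a hc))
        (fun h => (List.nodup_cons.mp hnd).1 (h ▸ hc)))
      (fun c hc => hc.elim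
        (fun h => h.elim (hP₀E c) (fun h' => h' ▸ haE))
        (fun h => hmem c (List.mem_cons_of_mem a h)))
    refine ⟨SCRed.cons (a ++ b) ρ₂ ?_ hstep ?_⟩
    · have := hlen a (List.mem_cons_self)
      simp only [List.length_append]
      omega
    · rw [show graftE X sσ' E (fun c => P₀ c ∨ c ∈ a :: L') hEinc hEdef hP₁E
        = graftE X sσ' E (fun c => (P₀ c ∨ c = a) ∨ c ∈ L') hEinc hEdef
          (fun c hc => hc.elim
            (fun h => h.elim (hP₀E c) (fun h' => h' ▸ haE))
            (fun h => hmem c (List.mem_cons_of_mem a h)))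
        from graftE_congr (by intro c; simp [List.mem_cons]; tauto)]
      exact R'

/-! ### The swap lemma: projecting a deep step over a shallower step -/

theorem swap_step {D : ℕ}
    (hD : ∀ (ρ' : S.R) (w : Pos) s, (S.lhs ρ').val w = some s → w.length + 1 ≤ D)
    (hll : LeftLinear S)
    {t t₁ t₂ : Term F V ar} {q r : Pos} {ρ ρ₂ : S.R}
    (h1 : StepRedex S ⟨q, ρ⟩ t t₁) (h2 : StepRedex S ⟨r, ρ₂⟩ t t₂)
    (hdeep : q.length + D ≤ r.length) :
    ∃ t₃, StepRedex S ⟨q, ρ⟩ t₂ t₃ ∧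
      Nonempty (SCRed S (r.length + 1 - D) t₁ t₃) := by
  classical
  have hD1 : 1 ≤ D := by
    obtain ⟨f₀, h₀⟩ := lhs_root S ρ
    simpa using hD ρ [] _ h₀
  obtain ⟨σ, hm, -, -⟩ := id h1
  by_cases hqr : q <+: r
  · -- nested case
    obtain ⟨w, rfl⟩ := hqr
    have hwlen : D ≤ w.length := by
      have := @List.length_append _ q w
      omega
    have hr_some : (t.val (q ++ w)).isSome := step_source_isSome h2
    have hexit : ∃ (x : V) (q₁ w₂ : Pos),
        w = q₁ ++ w₂ ∧ (S.lhs ρ).val q₁ = some (Sum.inr x) := by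
      rcases match_exit_var hm hr_some with h | h
      · exact h
      · exfalso
        rw [Option.isSome_iff_exists] at h
        obtain ⟨s0, hs0⟩ := h
        have := hD ρ w s0 hs0
        omega
    obtain ⟨x, q₁, w₂, rfl, hq₁⟩ := hexit
    have hq₁len : q₁.length + 1 ≤ D := hD ρ q₁ _ hq₁
    have hw₂ne : w₂ ≠ [] := by
      intro h
      subst h
      simp only [List.append_nil] at hwlen
      omega
    have h2' : StepRedex S ⟨(q ++ q₁) ++ w₂, ρ₂⟩ t t₂ := by
      rw [List.append_assoc]; exact h2
    have hq₁some : (t.val (q ++ q₁)).isSome := by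
      have h := hm.2 q₁ x hq₁ []
      simp only [List.append_nil] at h
      rw [h]
      exact (σ x).root_isSome
    have ht₂q₁ : (t₂.val (q ++ q₁)).isSome :=
      step_target_pos_isSome h2' (List.prefix_append _ _) hq₁some
    set sσ : Term F V ar := subtreeAt t (q ++ q₁) hq₁some with hsσ
    set sσ' : Term F V ar := subtreeAt t₂ (q ++ q₁) ht₂q₁ with hsσ'
    have hinner : StepRedex S ⟨w₂, ρ₂⟩ sσ sσ' := subtree_step h2' hq₁some ht₂q₁
    -- the region set
    set E : Pos → Prop :=
      fun c => ∃ e, (S.rhs ρ).val e = some (Sum.inr x) ∧ c = q ++ e with hE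
    have hEinc : ∀ c d, E c → E d → c ≠ d → ¬ c <+: d := by
      rintro c d ⟨e, he, rfl⟩ ⟨e', he', rfl⟩ hne hpre
      have hee' : e ≠ e' := fun h => hne (by rw [h])
      exact var_pos_not_prefix he he' hee' (list_prefix_append_iff.mp hpre)
    have hEdef : ∀ c, E c → (t₁.val c).isSome := by
      rintro c ⟨e, he, rfl⟩
      have h := step_var h1 he hq₁ []
      simp only [List.append_nil] at h
      rw [h]
      exact hq₁some
    have hEsub : ∀ c, E c → SubtreeEq t₁ c sσ := by
      rintro c ⟨e, he, rfl⟩ v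
      exact step_var h1 he hq₁ v
    set dcop : ℕ := (q ++ (q₁ ++ w₂)).length + 1 - D with hdcop
    have hdcople : ∀ n, dcop ≤ q.length + n + w₂.length := by
      intro n
      simp only [hdcop, List.length_append]
      omega
    -- the stages
    set Pn : ℕ → Pos → Prop := fun n c =>
      ∃ e, (S.rhs ρ).val e = some (Sum.inr x) ∧ c = q ++ e ∧ e.length < n with hPn
    have hPnE : ∀ n c, Pn n c → E c := by
      rintro n c ⟨e, he, rfl, -⟩; exact ⟨e, he, rfl⟩
    set g' : ℕ → Term F V ar :=
      fun n => graftE t₁ sσ' E (Pn n) hEinc hEdef (hPnE n) with hg'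
    set t₃ : Term F V ar :=
      graftE t₁ sσ' E E hEinc hEdef (fun c hc => hc) with ht₃
    -- occurrence lists
    set L : ℕ → List Pos := fun n =>
      (((posList (S.rhs ρ) n).filter
        (fun e => decide ((S.rhs ρ).val e = some (Sum.inr x)))).dedup).map
        (fun e => q ++ e) with hL
    have hLmem : ∀ n c, c ∈ L n ↔
        ∃ e, (S.rhs ρ).val e = some (Sum.inr x) ∧ c = q ++ e ∧ e.length = n := by
      intro n c
      simp only [hL, List.mem_map, List.mem_dedup, List.mem_filter,
        decide_eq_true_eq]
      constructor
      · rintro ⟨e, ⟨hp, he⟩, rfl⟩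
        exact ⟨e, he, rfl, posList_length hp⟩
      · rintro ⟨e, he, rfl, hlen⟩
        refine ⟨e, ⟨?_, he⟩, rfl⟩
        have : e ∈ posList (S.rhs ρ) e.length :=
          posList_complete (by rw [he]; rfl)
        rwa [hlen] at this
    have hLnodup : ∀ n, (L n).Nodup := by
      intro n
      have hinj : Function.Injective (fun e : Pos => q ++ e) :=
        fun a b h => List.append_cancel_left h
      exact (List.nodup_dedup _).map hinj
    -- the pieces
    have pieces : ∀ n, Nonempty (SCRed S (max dcop n) (g' n) (g' (n + 1))) := by
      intro n
      obtain ⟨R⟩ := graft_chain hinner hEinc hEdef hEsub (max dcop n) (L n)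
        (hLnodup n)
        (by rintro c hc
            obtain ⟨e, he, rfl, -⟩ := (hLmem n c).mp hc
            exact ⟨e, he, rfl⟩)
        (by rintro c hc
            obtain ⟨e, he, rfl, hlen⟩ := (hLmem n c).mp hc
            have h0 := hdcople n
            apply max_le
            · simp only [List.length_append, hlen]; omega
            · simp only [List.length_append, hlen]; omega)
        (Pn n) (hPnE n)
        (by rintro c hc ⟨e', he', heq, hlen'⟩
            obtain ⟨e, he, rfl, hlen⟩ := (hLmem n c).mp hc
            have he2 : e = e' := List.append_cancel_left heq
            rw [he2] at hlen
            omega)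
        (fun c hc => hc.elim (hPnE n c)
          (fun h => by
            obtain ⟨e, he, rfl, -⟩ := (hLmem n c).mp h
            exact ⟨e, he, rfl⟩))
      refine ⟨?_⟩
      rw [show g' (n + 1) = graftE t₁ sσ' E
          (fun c => Pn n c ∨ c ∈ L n) hEinc hEdef
          (fun c hc => hc.elim (hPnE n c)
            (fun h => by
              obtain ⟨e, he, rfl, -⟩ := (hLmem n c).mp h
              exact ⟨e, he, rfl⟩)) from graftE_congr ?_]
      · exact R
      · intro c
        constructor
        · rintro ⟨e, he, rfl, hlen⟩
          rcases Nat.lt_or_ge e.length n with h | h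
          · exact Or.inl ⟨e, he, rfl, h⟩
          · exact Or.inr ((hLmem n _).mpr ⟨e, he, rfl, by omega⟩)
        · rintro (⟨e, he, rfl, hlen⟩ | h)
          · exact ⟨e, he, rfl, by omega⟩
          · obtain ⟨e, he, rfl, hlen⟩ := (hLmem n c).mp h
            exact ⟨e, he, rfl, by omega⟩
    have hconv : ∀ n, AgreeUpTo n (g' n) t₃ := by
      intro n rr hrr
      show graftVal t₁ (Pn n) sσ' rr = graftVal t₁ E sσ' rr
      have hEinc' : ∀ c d, Pn n c → Pn n d → c ≠ d → ¬ c <+: d :=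
        fun c d hc hd => hEinc c d (hPnE n c hc) (hPnE n d hd)
      by_cases hc : ∃ c, E c ∧ c <+: rr
      · obtain ⟨c, hcE, hpre⟩ := hc
        obtain ⟨e, he, rfl⟩ := hcE
        by_cases hlen : e.length < n
        · rw [graftVal_eq_of hEinc ⟨e, he, rfl⟩ hpre,
            graftVal_eq_of hEinc' ⟨e, he, rfl, hlen⟩ hpre]
        · -- e.length ≥ n forces rr = q ++ e with q = []
          obtain ⟨v, rfl⟩ := hpre
          have hlenrr : q.length + e.length + v.length ≤ n := by
            have h0 := hrr
            simp only [List.length_append] at h0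
            omega
          have hv0 : v = [] := by
            cases v with
            | nil => rfl
            | cons _ _ => exfalso; simp at hlenrr; omega
          subst hv0
          rw [graftVal_eq_of hEinc ⟨e, he, rfl⟩ (by simp)]
          rw [graftVal_eq_of_not (by
            rintro ⟨c', ⟨e', he', rfl, hlen'⟩, hpre'⟩
            rw [List.append_nil] at hpre'
            have hne : e' ≠ e := by intro h; rw [h] at hlen'; omega
            exact var_pos_not_prefix he' he hne
              (list_prefix_append_iff.mp hpre'))]
          rw [List.append_nil, List.drop_length]
          have h := hEsub (q ++ e) ⟨e, he, rfl⟩ []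
          rw [List.append_nil] at h
          rw [h]
          exact (step_outside hinner (fun hp => hw₂ne (List.prefix_nil.mp hp))).symm
      · rw [graftVal_eq_of_not hc, graftVal_eq_of_not (by
          rintro ⟨c, hcP, hpre⟩
          exact hc ⟨c, hPnE n c hcP, hpre⟩)]
    -- copies from t₁ to t₃
    have hg'0 : g' 0 = t₁ :=
      graftTerm_empty (by rintro c ⟨e, he, rfl, hlen⟩; omega)
    have copies : Nonempty (SCRed S dcop t₁ t₃) := by
      have piece : ∀ n, SCRed S (max dcop n) (g' n) (g' (n + 1)) :=
        fun n => (pieces n).some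
      refine ⟨?_⟩
      rw [← hg'0]
      exact SCRed.limCons g' piece hconv (SCRed.nil _ _)
    -- the step from t₂ to t₃
    have hagree : ∀ q' : Pos, ((S.lhs ρ).val q').isSome →
        t₂.val (q ++ q') = t.val (q ++ q') := by
      intro q' hsome
      apply step_outside h2
      intro hpre
      have hple : q.length + (q₁.length + w₂.length) ≤ q.length + q'.length := by
        have := hpre.length_le
        simp only [List.length_append] at this
        omega
      rw [Option.isSome_iff_exists] at hsome
      obtain ⟨s0, hs0⟩ := hsome
      have hq'len := hD ρ q' s0 hs0
      have hw := hwlen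
      simp only [List.length_append] at hw
      omega
    obtain ⟨σ₂, hm₂⟩ := matchesAt_transfer hll hm hagree
    obtain ⟨t₃', h3'⟩ := stepRedex_exists hm₂
    have h3 : StepRedex S ⟨q, ρ⟩ t₂ t₃' := h3'
    clear h3'
    have hteq : t₃' = t₃ := by
      apply Term.ext'
      intro rr
      by_cases hq' : q <+: rr
      · obtain ⟨v, rfl⟩ := hq'
        by_cases hd : ∃ (y : V) (w₁ v₂ : Pos),
            v = w₁ ++ v₂ ∧ (S.rhs ρ).val w₁ = some (Sum.inr y)
        · obtain ⟨y, w₁, v₂, rfl, hy⟩ := hd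
          by_cases hxy : y = x
          · subst hxy
            have hstep3' : t₃'.val ((q ++ w₁) ++ v₂) = t₂.val ((q ++ q₁) ++ v₂) :=
              step_var h3 hy hq₁ v₂
            rw [← List.append_assoc, hstep3']
            rw [show t₃.val ((q ++ w₁) ++ v₂) = graftVal t₁ E sσ' ((q ++ w₁) ++ v₂)
              from rfl]
            rw [graftVal_eq_of hEinc ⟨w₁, hy, rfl⟩ (List.prefix_append _ _),
              List.drop_left]
            rfl
          · obtain ⟨q₁y, hq₁y⟩ := S.var_cond ρ y w₁ hy
            have hstep3' : t₃'.val ((q ++ w₁) ++ v₂) = t₂.val ((q ++ q₁y) ++ v₂) :=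
              step_var h3 hy hq₁y v₂
            have hstep1' : t₁.val ((q ++ w₁) ++ v₂) = t.val ((q ++ q₁y) ++ v₂) :=
              step_var h1 hy hq₁y v₂
            have hnoreg : ¬ ∃ c, E c ∧ c <+: (q ++ w₁) ++ v₂ := by
              rintro ⟨c, ⟨e, he, rfl⟩, hpre⟩
              rw [List.append_assoc] at hpre
              have hew : e <+: w₁ ++ v₂ := list_prefix_append_iff.mp hpre
              rcases prefix_comparable hew (List.prefix_append w₁ v₂) with h | h
              · rcases eq_or_ne e w₁ with rfl | hne
                · rw [he] at hy
                  exact hxy (Sum.inr.inj (Option.some.inj hy)).symm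
                · exact var_pos_not_prefix he hy hne h
              · rcases eq_or_ne w₁ e with rfl | hne
                · rw [he] at hy
                  exact hxy (Sum.inr.inj (Option.some.inj hy)).symm
                · exact var_pos_not_prefix hy he hne h
            have ht₃e : t₃.val ((q ++ w₁) ++ v₂) = t₁.val ((q ++ w₁) ++ v₂) :=
              graftVal_eq_of_not hnoreg
            have houter : t₂.val ((q ++ q₁y) ++ v₂) = t.val ((q ++ q₁y) ++ v₂) := by
              apply step_outside h2
              intro hpre
              rw [List.append_assoc] at hpre
              have h1p : q₁ ++ w₂ <+: q₁y ++ v₂ := list_prefix_append_iff.mp hpre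
              have hq₁q₁y : q₁ <+: q₁y ++ v₂ :=
                (List.prefix_append q₁ w₂).trans h1p
              have hq₁ne : q₁ ≠ q₁y := by
                intro h
                rw [← h] at hq₁y
                rw [hq₁] at hq₁y
                exact hxy (Sum.inr.inj (Option.some.inj hq₁y)).symm
              rcases prefix_comparable hq₁q₁y (List.prefix_append q₁y v₂) with h | h
              · exact FTerm.var_not_prefix hq₁ hq₁y hq₁ne h
              · exact FTerm.var_not_prefix hq₁y hq₁ (Ne.symm hq₁ne) h
            rw [← List.append_assoc, hstep3', houter, ht₃e, hstep1']
        · have hnoreg : ¬ ∃ c, E c ∧ c <+: q ++ v := by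
            rintro ⟨c, ⟨e, he, rfl⟩, hpre⟩
            obtain ⟨v₂, rfl⟩ := list_prefix_append_iff.mp hpre
            exact hd ⟨x, e, v₂, rfl, he⟩
          have ht₃v : t₃.val (q ++ v) = t₁.val (q ++ v) := graftVal_eq_of_not hnoreg
          rcases hv : (S.rhs ρ).val v with _ | s0
          · rw [step_none h3 hd hv, ht₃v, step_none h1 hd hv]
          · cases s0 with
            | inl f => rw [step_inl h3 hv, ht₃v, step_inl h1 hv]
            | inr y => exact absurd ⟨y, v, [], by simp, hv⟩ hd
      · rw [step_outside h3 hq']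
        have hnoreg : ¬ ∃ c, E c ∧ c <+: rr := by
          rintro ⟨c, ⟨e, he, rfl⟩, hpre⟩
          exact hq' ((List.prefix_append q e).trans hpre)
        rw [show t₃.val rr = graftVal t₁ E sσ' rr from rfl,
          graftVal_eq_of_not hnoreg]
        rw [step_outside h1 hq']
        apply step_outside h2
        intro hpre
        exact hq' ((List.prefix_append q (q₁ ++ w₂)).trans hpre)
    exact ⟨t₃, hteq ▸ h3, copies⟩
  · -- disjoint case
    have hrq : ¬ r <+: q := by
      intro h
      have := h.length_le
      omega
    have hcomp : ∀ v : Pos, ¬ r <+: q ++ v := by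
      intro v hpre
      rcases prefix_comparable hpre (List.prefix_append q v) with h | h
      · exact hrq h
      · exact hqr h
    have hcomp' : ∀ v : Pos, ¬ q <+: r ++ v := by
      intro v hpre
      rcases prefix_comparable hpre (List.prefix_append r v) with h | h
      · exact hqr h
      · exact hrq h
    obtain ⟨σᵣ, hmᵣ, -, -⟩ := id h2
    have hagree2 : ∀ q' : Pos, ((S.lhs ρ).val q').isSome →
        t₂.val (q ++ q') = t.val (q ++ q') :=
      fun q' _ => step_outside h2 (hcomp q')
    obtain ⟨σ₂, hm₂⟩ := matchesAt_transfer hll hm hagree2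
    obtain ⟨t₃, h3⟩ := stepRedex_exists hm₂
    have hagree4 : ∀ r' : Pos, ((S.lhs ρ₂).val r').isSome →
        t₁.val (r ++ r') = t.val (r ++ r') :=
      fun r' _ => step_outside h1 (hcomp' r')
    obtain ⟨σ₄, hm₄⟩ := matchesAt_transfer hll hmᵣ hagree4
    obtain ⟨t₄, h4⟩ := stepRedex_exists hm₄
    have hteq : t₄ = t₃ := by
      apply Term.ext'
      intro rr
      by_cases hq' : q <+: rr
      · obtain ⟨v, rfl⟩ := hq'
        rw [step_outside h4 (hcomp v)]
        exact step_val_eq h1 h3 (fun v' => (step_outside h2 (hcomp v')).symm)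
      · by_cases hr' : r <+: rr
        · obtain ⟨v, rfl⟩ := hr'
          rw [step_outside h3 (hcomp' v)]
          exact (step_val_eq h2 h4
            (fun v' => (step_outside h1 (hcomp' v')).symm)).symm
        · rw [step_outside h4 hr', step_outside h3 hq', step_outside h1 hq',
            step_outside h2 hr']
    exact ⟨t₃, h3, ⟨SCRed.cons r ρ₂ (by omega) (hteq ▸ h4) (SCRed.nil _ _)⟩⟩

/-! ### The projection lemma: a step past a deep strongly convergent reduction -/

theorem crux {D : ℕ} (hD1 : 1 ≤ D)
    (hD : ∀ (ρ' : S.R) (w : Pos) s, (S.lhs ρ').val w = some s → w.length + 1 ≤ D)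
    (hll : LeftLinear S) :
    ∀ {m : ℕ} {t u : Term F V ar} (R : SCRed S m t u)
      {q : Pos} {ρ : S.R} {t₁ : Term F V ar},
      StepRedex S ⟨q, ρ⟩ t t₁ → q.length + D ≤ m →
      ∃ u₁, StepRedex S ⟨q, ρ⟩ u u₁ ∧ Nonempty (SCRed S (m + 1 - D) t₁ u₁) := by
  intro m t u R
  induction R with
  | nil d t =>
    intro q ρ t₁ h1 hb
    exact ⟨t₁, h1, ⟨SCRed.nil _ _⟩⟩
  | cons r ρ₂ hd hs rest ih =>
    intro q ρ t₁ h1 hb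
    obtain ⟨t₃, h₂₃, ⟨copies⟩⟩ := swap_step hD hll h1 hs (by omega)
    obtain ⟨u₁, hu₁, ⟨proj⟩⟩ := ih h₂₃ hb
    exact ⟨u₁, hu₁, ⟨(copies.weaken (by omega)).concat proj⟩⟩
  | limCons g pieces hconv rest ihp ihr =>
    intro q ρ t₁ h1 hb
    rename_i m' w u'
    have hbound : ∀ n, q.length + D ≤ max m' n := fun n =>
      le_trans hb (le_max_left _ _)
    -- the chain of projected terms along the pieces
    let c : ∀ n, {a : Term F V ar // StepRedex S ⟨q, ρ⟩ (g n) a} :=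
      fun n => Nat.rec ⟨t₁, h1⟩
        (fun k ck => ⟨(ihp k ck.2 (hbound k)).choose,
          (ihp k ck.2 (hbound k)).choose_spec.1⟩) n
    have proj : ∀ k, Nonempty (SCRed S (max m' k + 1 - D) (c k).1 (c (k + 1)).1) :=
      fun k => (ihp k (c k).2 (hbound k)).choose_spec.2
    -- the step at the limit
    obtain ⟨σ0, hm0, -, -⟩ := id h1
    have hA : ∀ r : Pos, r.length < m' → (g 0).val r = w.val r :=
      fun r hr => SCRed.agree (SCRed.limCons g pieces hconv (SCRed.nil _ _)) r hr
    have hagreew : ∀ q' : Pos, ((S.lhs ρ).val q').isSome →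
        w.val (q ++ q') = (g 0).val (q ++ q') := by
      intro q' hsome
      rw [Option.isSome_iff_exists] at hsome
      obtain ⟨s0, hs0⟩ := hsome
      have hlen := hD ρ q' s0 hs0
      refine (hA (q ++ q') ?_).symm
      simp only [List.length_append]
      omega
    obtain ⟨σw, hmw⟩ := matchesAt_transfer hll hm0 hagreew
    obtain ⟨wn, hhwn0⟩ := stepRedex_exists hmw
    have hwn : StepRedex S ⟨q, ρ⟩ w wn := hhwn0
    clear hhwn0
    obtain ⟨u₁, hu₁, ⟨projrest⟩⟩ := ihr hwn hb
    -- agreement of the chain with the limit step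
    have agreec : ∀ j, ∀ r : Pos, r.length + D ≤ max j (m' - 1) + 1 →
        (c j).1.val r = wn.val r := by
      intro j r hr
      have hts : ∀ r' : Pos, r'.length ≤ max j (m' - 1) →
          (g j).val r' = w.val r' := by
        intro r' hr'
        rcases le_max_iff.mp hr' with h | h
        · exact hconv j r' h
        · by_cases hm0 : m' = 0
          · exact hconv j r' (by omega)
          · exact SCRed.agree (SCRed.limTail g pieces hconv j) r'
              (lt_of_lt_of_le (by omega) (le_max_left _ _))
      exact stepRedex_agree hD hts (c j).2 hwn hr
    -- assemble
    have head : ∀ j, Nonempty (SCRed S (m' + 1 - D) t₁ (c j).1) := by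
      intro j
      induction j with
      | zero => exact ⟨SCRed.nil _ _⟩
      | succ k hk =>
        exact ⟨hk.some.concat ((proj k).some.weaken (by
          have := le_max_left m' k; omega))⟩
    refine ⟨u₁, hu₁, ⟨(head (D - 1)).some.concat ?_⟩⟩
    refine SCRed.limCons (fun n => (c ((D - 1) + n)).1)
      (fun n => (proj ((D - 1) + n)).some.weaken ?_) (fun n => ?_) projrest
    · apply max_le
      · have := le_max_left m' ((D - 1) + n); omega
      · have := le_max_right m' ((D - 1) + n); omega
    · intro r hrr
      exact agreec ((D - 1) + n) r (by
        have := le_max_left ((D - 1) + n) (m' - 1)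
        omega)

/-! ### Pushing a finite reduction backwards past a deep reduction -/

theorem pushlist {D : ℕ} (hD1 : 1 ≤ D)
    (hD : ∀ (ρ' : S.R) (w : Pos) s, (S.lhs ρ').val w = some s → w.length + 1 ≤ D)
    (hll : LeftLinear S) :
    ∀ {a b : Term F V ar} (fin : FinRed S a b) {B : ℕ} {v : Term F V ar}
      (_ : SCRed S B v a),
      fin.maxDepth + D * (fin.length + 1) ≤ B →
      ∃ cEnd, Nonempty (FinRed S v cEnd) ∧
        Nonempty (SCRed S (B - D * fin.length) cEnd b) := by
  intro a b fin
  induction fin with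
  | nil t =>
    intro B v T hB
    exact ⟨v, ⟨FinRed.nil v⟩, ⟨T.weaken (by simp)⟩⟩
  | cons r ρ₂ hstep rest ih =>
    intro B v T hB
    rename_i a a₂ b'
    simp only [FinRed.maxDepth, FinRed.length] at hB
    have hmul : D * (rest.length + 1 + 1) = D * (rest.length + 1) + D := by ring
    have hr1 : r.length ≤ max r.length rest.maxDepth := le_max_left _ _
    have hr2 : rest.maxDepth ≤ max r.length rest.maxDepth := le_max_right _ _
    -- transfer the first step to v
    obtain ⟨σ0, hm0, -, -⟩ := id hstep
    have hagree : ∀ q' : Pos, ((S.lhs ρ₂).val q').isSome →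
        v.val (r ++ q') = a.val (r ++ q') := by
      intro q' hsome
      rw [Option.isSome_iff_exists] at hsome
      obtain ⟨s0, hs0⟩ := hsome
      have hlen := hD ρ₂ q' s0 hs0
      apply T.agree
      simp only [List.length_append]
      have h1 : r.length ≤ max r.length rest.maxDepth := le_max_left _ _
      omega
    obtain ⟨σv, hmv⟩ := matchesAt_transfer hll hm0 hagree
    obtain ⟨v₂, hv₂'⟩ := stepRedex_exists hmv
    have hv₂ : StepRedex S ⟨r, ρ₂⟩ v v₂ := hv₂'
    clear hv₂'
    obtain ⟨atil, hatil, ⟨proj⟩⟩ := crux hD1 hD hll T hv₂ (by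
      have h1 : r.length ≤ max r.length rest.maxDepth := le_max_left _ _
      omega)
    have hatileq : atil = a₂ := stepRedex_unique hatil hstep
    subst hatileq
    obtain ⟨cEnd, ⟨fin'⟩, ⟨T'⟩⟩ := ih proj (by
      have h2 : rest.maxDepth ≤ max r.length rest.maxDepth := le_max_right _ _
      omega)
    refine ⟨cEnd, ⟨FinRed.cons r ρ₂ hv₂ fin'⟩, ⟨T'.weaken (by
      simp only [FinRed.length]
      have hm2 : D * (rest.length + 1) = D * rest.length + D := by ring
      omega)⟩⟩

/-! ### The scan: extracting a finite prefix with arbitrarily deep tail -/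

theorem scan {D : ℕ} (hD1 : 1 ≤ D)
    (hD : ∀ (ρ' : S.R) (w : Pos) s, (S.lhs ρ').val w = some s → w.length + 1 ≤ D)
    (hll : LeftLinear S) :
    ∀ {d : ℕ} {t u : Term F V ar} (R : SCRed S d t u) (θ : ℕ),
      ∃ c, Nonempty (FinRed S t c) ∧ Nonempty (SCRed S (θ + 1) c u) := by
  intro d t u R
  induction R with
  | nil d t =>
    intro θ
    exact ⟨t, ⟨FinRed.nil t⟩, ⟨SCRed.nil _ _⟩⟩
  | cons q ρ hd hs rest ih =>
    intro θ
    obtain ⟨c, ⟨fin⟩, hT⟩ := ih θ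
    exact ⟨c, ⟨FinRed.cons q ρ hs fin⟩, hT⟩
  | limCons g pieces hconv rest ihp ihr =>
    intro θ
    rename_i d' w u'
    obtain ⟨cr, ⟨finr⟩, ⟨Tr⟩⟩ := ihr θ
    set N : ℕ := max (θ + 1 + D * finr.length)
      (finr.maxDepth + D * (finr.length + 1)) with hN
    have tailN : SCRed S N (g N) w :=
      (SCRed.limTail g pieces hconv N).weaken (le_max_right d' N)
    obtain ⟨c₁, ⟨fin₁⟩, ⟨T₁⟩⟩ := pushlist hD1 hD hll finr tailN (by
      have := le_max_right (θ + 1 + D * finr.length)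
        (finr.maxDepth + D * (finr.length + 1))
      omega)
    have hcur : ∃ c', Nonempty (FinRed S (g N) c') ∧
        Nonempty (SCRed S (θ + 1) c' u') := by
      refine ⟨c₁, ⟨fin₁⟩, ⟨(T₁.weaken ?_).concat Tr⟩⟩
      have := le_max_left (θ + 1 + D * finr.length)
        (finr.maxDepth + D * (finr.length + 1))
      omega
    have down : ∀ k, ∃ c', Nonempty (FinRed S (g (N - k)) c') ∧
        Nonempty (SCRed S (θ + 1) c' u') := by
      intro k
      induction k with
      | zero => simpa using hcur
      | succ k' ihk =>
        obtain ⟨c', ⟨fin'⟩, ⟨T'⟩⟩ := ihk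
        by_cases hk : N ≤ k'
        · have : N - (k' + 1) = N - k' := by omega
          rw [this]
          exact ⟨c', ⟨fin'⟩, ⟨T'⟩⟩
        · set j : ℕ := N - (k' + 1) with hj
          have hj1 : j + 1 = N - k' := by omega
          set thj : ℕ := max (θ + D * fin'.length)
            (fin'.maxDepth + D * (fin'.length + 1)) with hthj
          obtain ⟨cp, ⟨finp⟩, ⟨Tp⟩⟩ := ihp j thj
          have Tp' : SCRed S (thj + 1) cp (g (N - k')) := by
            rw [← hj1]; exact Tp
          obtain ⟨c'', ⟨finpp⟩, ⟨Tpp⟩⟩ := pushlist hD1 hD hll fin' Tp' (by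
            have := le_max_right (θ + D * fin'.length)
              (fin'.maxDepth + D * (fin'.length + 1))
            omega)
          refine ⟨c'', ⟨finp.append finpp⟩, ⟨(Tpp.weaken ?_).concat T'⟩⟩
          have := le_max_left (θ + D * fin'.length)
            (fin'.maxDepth + D * (fin'.length + 1))
          omega
    have h0 := down N
    rw [Nat.sub_self] at h0
    exact h0

/-! ### Converting strongly continuous prefixes to inductive reductions -/

theorem convert {α : Ordinal} {f : Ordinal → Term F V ar} {p : Ordinal → Pos}
    {s : Term F V ar} (hκ : IsSContRed S α f p s) :
    ∀ γ < α, ∀ β ≤ γ, ∀ d : ℕ,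
      (∀ δ, β ≤ δ → δ < γ → d ≤ (p δ).length) →
      Nonempty (SCRed S d (f β) (f γ)) := by
  intro γ
  induction γ using Ordinal.induction with
  | h γ ih =>
    intro hγα β hβγ d hdeep
    rcases eq_or_lt_of_le hβγ with rfl | hβγ'
    · exact ⟨SCRed.nil d _⟩
    rcases Ordinal.zero_or_succ_or_isSuccLimit γ with rfl | ⟨δ, rfl⟩ | hlim
    · exact absurd hβγ' (not_lt_zero (a := β))
    · -- successor case
      have hδγ : δ < Order.succ δ := Order.lt_succ δ
      have hβδ : β ≤ δ := Order.lt_succ_iff.mp hβγ'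
      have hδα : δ < α := lt_trans hδγ hγα
      obtain ⟨R⟩ := ih δ hδγ hδα β hβδ d
        (fun δ' h1 h2 => hdeep δ' h1 (lt_trans h2 hδγ))
      obtain ⟨ρ, hstep⟩ := hκ.2.1 δ hδα
      have hgoal : Nonempty (SCRed S d (f β) (f (δ + 1))) :=
        ⟨R.concat (SCRed.cons (p δ) ρ (hdeep δ hβδ hδγ) hstep (SCRed.nil d _))⟩
      rwa [Ordinal.add_one_eq_succ] at hgoal
    · -- limit case
      have hw : ∀ n : ℕ, ∃ β' < γ, ∀ δ, β' ≤ δ → δ < γ →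
          AgreeUpTo n (f δ) (f γ) ∧ n ≤ (p δ).length := hκ.2.2 γ hγα hlim
      choose wit hwitlt hwit using hw
      let c : ℕ → Ordinal := fun n =>
        Nat.rec (max β (wit 0)) (fun k ck => max ck (wit (k + 1))) n
      have hclt : ∀ n, c n < γ := by
        intro n
        induction n with
        | zero => exact max_lt hβγ' (hwitlt 0)
        | succ k ihk => exact max_lt ihk (hwitlt (k + 1))
      have hcmono : ∀ n, c n ≤ c (n + 1) := fun n => le_max_left _ _
      have hcwit : ∀ n, wit n ≤ c n := by
        intro n
        cases n with
        | zero => exact le_max_right _ _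
        | succ k => exact le_max_right _ _
      have hcβ : β ≤ c 0 := le_max_left _ _
      have hcβn : ∀ n, β ≤ c n := by
        intro n
        induction n with
        | zero => exact hcβ
        | succ k ihk => exact le_trans ihk (hcmono k)
      have pieces : ∀ n, Nonempty (SCRed S (max d n)
          (f (c n)) (f (c (n + 1)))) := by
        intro n
        apply ih (c (n + 1)) (hclt (n + 1)) (lt_trans (hclt (n + 1)) hγα)
          (c n) (hcmono n) (max d n)
        intro δ h1 h2
        have hδγ : δ < γ := lt_trans h2 (hclt (n + 1))
        apply max_le
        · exact hdeep δ (le_trans (hcβn n) h1) hδγ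
        · exact (hwit n δ (le_trans (hcwit n) h1) hδγ).2
      obtain ⟨head⟩ := ih (c 0) (hclt 0) (lt_trans (hclt 0) hγα) β hcβ d
        (fun δ h1 h2 => hdeep δ h1 (lt_trans h2 (hclt 0)))
      have piece : ∀ n, SCRed S (max d n) (f (c n)) (f (c (n + 1))) :=
        fun n => (pieces n).some
      refine ⟨head.concat (SCRed.limCons (fun n => f (c n)) piece ?_
        (SCRed.nil d _))⟩
      intro n
      exact (hwit n (c n) (hcwit n) (hclt n)).1

/-! ### One stage of the construction -/

theorem stage {D k : ℕ} (hD1 : 1 ≤ D)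
    (hD : ∀ (ρ' : S.R) (w : Pos) s, (S.lhs ρ').val w = some s → w.length + 1 ≤ D)
    (hll : LeftLinear S)
    {α : Ordinal} {f : Ordinal → Term F V ar} {p : Ordinal → Pos}
    {s : Term F V ar}
    (hκ : IsSContRed S α f p s) (hαlim : Order.IsSuccLimit α)
    (hdiv : ∀ β < α, ∃ γ, β ≤ γ ∧ γ < α ∧ (p γ).length < k) :
    ∀ (β : Ordinal), β < α → ∀ (w0 : Term F V ar),
      Nonempty (SCRed S 0 w0 (f β)) →
      ∃ (w' xx : Term F V ar) (β' : Ordinal) (qf : Pos) (ρf : S.R),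
        Nonempty (FinRed S w0 w') ∧ qf.length < k ∧
        StepRedex S ⟨qf, ρf⟩ w' xx ∧ β' < α ∧
        Nonempty (SCRed S 0 xx (f β')) := by
  intro β hβα w0 ⟨V0⟩
  obtain ⟨γ, hβγ, hγα, hshallow⟩ := hdiv β hβα
  obtain ⟨Seg⟩ := convert hκ γ hγα β hβγ 0 (fun _ _ _ => Nat.zero_le _)
  obtain ⟨w', ⟨fin⟩, ⟨T'⟩⟩ := scan hD1 hD hll (V0.concat Seg) (k + D)
  obtain ⟨ρf, hstepf⟩ := hκ.2.1 γ hγα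
  obtain ⟨σf, hmf, -, -⟩ := id hstepf
  have hagree : ∀ q' : Pos, ((S.lhs ρf).val q').isSome →
      w'.val (p γ ++ q') = (f γ).val (p γ ++ q') := by
    intro q' hsome
    rw [Option.isSome_iff_exists] at hsome
    obtain ⟨s0, hs0⟩ := hsome
    have hlen := hD ρf q' s0 hs0
    apply T'.agree
    simp only [List.length_append]
    omega
  obtain ⟨σw, hmw⟩ := matchesAt_transfer hll hmf hagree
  obtain ⟨xx, hx'⟩ := stepRedex_exists hmw
  have hx : StepRedex S ⟨p γ, ρf⟩ w' xx := hx'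
  clear hx'
  obtain ⟨z, hz, ⟨proj⟩⟩ := crux hD1 hD hll T' hx (by omega)
  have hzeq : z = f (γ + 1) := stepRedex_unique hz hstepf
  subst hzeq
  have hγ1 : γ + 1 < α := by
    rw [Ordinal.add_one_eq_succ]
    exact hαlim.succ_lt hγα
  exact ⟨w', xx, γ + 1, p γ, ρf, ⟨fin⟩, hshallow, hx, hγ1,
    ⟨proj.weaken (Nat.zero_le _)⟩⟩

/-! ### Flattening infrastructure -/

def FinRed.lastPos? : ∀ {t u}, FinRed S t u → Option Pos
  | _, _, .nil _ => none
  | _, _, .cons q _ _ rest => some ((rest.lastPos?).getD q)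

theorem FinRed.lastPos?_append_single {t u v : Term F V ar}
    (fin : FinRed S t u) {q : Pos} {ρ : S.R} (h : StepRedex S ⟨q, ρ⟩ u v) :
    (fin.append (FinRed.cons q ρ h (FinRed.nil v))).lastPos? = some q := by
  induction fin with
  | nil t => simp [FinRed.append, FinRed.lastPos?]
  | cons q' ρ' h' rest ih =>
    show (FinRed.cons q' ρ' h' (rest.append _)).lastPos? = some q
    rw [FinRed.lastPos?, ih]
    rfl

end Compression

end WOInf

namespace WOInf

/-- Let `R` be a left-linear iTRS.  For every divergent
(not strongly convergent) strongly continuous transfinite reduction sequence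
starting from a term `s`, of any ordinal length `α`, there is a divergent
reduction sequence starting from `s` of length at most `ω`. -/
theorem compression_divergent {F V : Type} {ar : F → ℕ} (S : ITRS F V ar)
    (hll : LeftLinear S) (s : Term F V ar)
    (α : Ordinal) (f : Ordinal → Term F V ar) (p : Ordinal → Pos)
    (hκ : IsSContRed S α f p s) (hdiv : Divergent α p) :
    ∃ (β : Ordinal) (f' : Ordinal → Term F V ar) (p' : Ordinal → Pos),
      β ≤ Ordinal.omega0 ∧ IsSContRed S β f' p' s ∧ Divergent β p' := by
  classical
  obtain ⟨hαlim, hndiv⟩ := hdiv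
  push_neg at hndiv
  obtain ⟨k, hk⟩ := hndiv
  obtain ⟨D, hD1, hD⟩ := exists_depth_bound S
  have hstage := stage (k := k) hD1 hD hll hκ hαlim hk
  -- the state type of the construction
  let StT := {wβ : Term F V ar × Ordinal //
    wβ.2 < α ∧ Nonempty (SCRed S 0 wβ.1 (f wβ.2))}
  have next : ∀ st : StT,
      ∃ (w' xx : Term F V ar) (β' : Ordinal) (qf : Pos) (ρf : S.R),
        Nonempty (FinRed S st.1.1 w') ∧ qf.length < k ∧
        StepRedex S ⟨qf, ρf⟩ w' xx ∧ β' < α ∧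
        Nonempty (SCRed S 0 xx (f β')) :=
    fun st => hstage st.1.2 st.2.1 st.1.1 st.2.2
  choose w' xx β' qf ρf hfin hsh hstep hβ' hV using next
  let nxt : StT → StT := fun st => ⟨(xx st, β' st), hβ' st, hV st⟩
  let blockF : ∀ st : StT, FinRed S st.1.1 (xx st) := fun st =>
    (hfin st).some.append
      (FinRed.cons (qf st) (ρf st) (hstep st) (FinRed.nil _))
  have blockLast : ∀ st : StT, (blockF st).lastPos? = some (qf st) :=
    fun st => FinRed.lastPos?_append_single _ _
  -- master states: current term, target state, remaining block
  let MSt := Σ' (a : Term F V ar) (st : StT),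
    {fr : FinRed S a (xx st) // ∃ q0, fr.lastPos? = some q0 ∧ q0.length < k}
  have transFull : ∀ ms : MSt, Σ' (ms' : MSt) (q : Pos) (ρσ : S.R),
      PLift (StepRedex S ⟨q, ρσ⟩ ms.1 ms'.1) ×'
      PLift ((ms.2.2.1.length = 1 ∧ q.length < k) ∨
        ms'.2.2.1.length + 1 = ms.2.2.1.length) := by
    rintro ⟨a, st, fr, hends⟩
    cases fr with
    | nil =>
      exfalso
      obtain ⟨q0, hq0, -⟩ := hends
      simp [FinRed.lastPos?] at hq0
    | cons q ρσ h rest =>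
      cases rest with
      | nil =>
        refine ⟨⟨xx st, nxt st, blockF (nxt st),
          ⟨qf (nxt st), blockLast (nxt st), hsh (nxt st)⟩⟩, q, ρσ, ⟨h⟩,
          ⟨Or.inl ⟨rfl, ?_⟩⟩⟩
        obtain ⟨q0, hq0, hq0k⟩ := hends
        simp only [FinRed.lastPos?, Option.getD_none, Option.some.injEq] at hq0
        rwa [← hq0] at hq0k
      | cons q2 ρ2 h2 rest2 =>
        refine ⟨⟨_, st, FinRed.cons q2 ρ2 h2 rest2, ?_⟩, q, ρσ, ⟨h⟩,
          ⟨Or.inr rfl⟩⟩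
        obtain ⟨q0, hq0, hq0k⟩ := hends
        refine ⟨q0, ?_, hq0k⟩
        simp only [FinRed.lastPos?, Option.getD_some, Option.some.injEq] at hq0 ⊢
        exact hq0
  -- initial state
  have V00 : SCRed S 0 s (f 0) := by rw [hκ.1]; exact SCRed.nil 0 s
  let st0 : StT := ⟨(s, 0), hαlim.pos, ⟨V00⟩⟩
  let ms0 : MSt := ⟨s, st0, blockF st0,
    ⟨qf st0, blockLast st0, hsh st0⟩⟩
  let mseq : ℕ → MSt := fun n => Nat.rec ms0 (fun _ ms => (transFull ms).1) n
  let qseq : ℕ → Pos := fun n => (transFull (mseq n)).2.1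
  let ρseq : ℕ → S.R := fun n => (transFull (mseq n)).2.2.1
  have hstepSeq : ∀ n, StepRedex S ⟨qseq n, ρseq n⟩ (mseq n).1 (mseq (n + 1)).1 :=
    fun n => ((transFull (mseq n)).2.2.2.1).down
  have hprop : ∀ n, ((mseq n).2.2.1.length = 1 ∧ (qseq n).length < k) ∨
      (mseq (n + 1)).2.2.1.length + 1 = (mseq n).2.2.1.length :=
    fun n => ((transFull (mseq n)).2.2.2.2).down
  -- shallow steps occur infinitely often
  have shal : ∀ L n, (mseq n).2.2.1.length ≤ L →
      ∃ j, (qseq (n + j)).length < k := by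
    intro L
    induction L with
    | zero =>
      intro n hn
      rcases hprop n with ⟨-, hq⟩ | hlen
      · exact ⟨0, hq⟩
      · omega
    | succ L ih =>
      intro n hn
      rcases hprop n with ⟨-, hq⟩ | hlen
      · exact ⟨0, hq⟩
      · obtain ⟨j, hj⟩ := ih (n + 1) (by omega)
        exact ⟨j + 1, by rw [show n + (j + 1) = (n + 1) + j by omega]; exact hj⟩
  have shal' : ∀ n, ∃ j, (qseq (n + j)).length < k :=
    fun n => shal (mseq n).2.2.1.length n (le_refl _)
  -- the ω-indexed sequence
  let terms : ℕ → Term F V ar := fun n => (mseq n).1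
  let f' : Ordinal → Term F V ar := fun o =>
    if h : o < Ordinal.omega0 then terms (Ordinal.lt_omega0.mp h).choose else s
  let p' : Ordinal → Pos := fun o =>
    if h : o < Ordinal.omega0 then qseq (Ordinal.lt_omega0.mp h).choose else []
  have hf' : ∀ n : ℕ, f' (n : Ordinal) = terms n := by
    intro n
    have h : (n : Ordinal) < Ordinal.omega0 := Ordinal.nat_lt_omega0 n
    show (if h : (n : Ordinal) < Ordinal.omega0 then _ else _) = _
    rw [dif_pos h]
    congr 1
    exact (Nat.cast_inj.mp (Ordinal.lt_omega0.mp h).choose_spec).symm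
  have hp' : ∀ n : ℕ, p' (n : Ordinal) = qseq n := by
    intro n
    have h : (n : Ordinal) < Ordinal.omega0 := Ordinal.nat_lt_omega0 n
    show (if h : (n : Ordinal) < Ordinal.omega0 then _ else _) = _
    rw [dif_pos h]
    congr 1
    exact (Nat.cast_inj.mp (Ordinal.lt_omega0.mp h).choose_spec).symm
  refine ⟨Ordinal.omega0, f', p', le_refl _, ⟨?_, ?_, ?_⟩, ?_, ?_⟩
  · -- f' 0 = s
    have h0 : ((0 : ℕ) : Ordinal) = 0 := Nat.cast_zero
    rw [← h0, hf' 0]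
    rfl
  · -- steps
    intro β hβ
    obtain ⟨n, rfl⟩ := Ordinal.lt_omega0.mp hβ
    have hsucc : (n : Ordinal) + 1 = ((n + 1 : ℕ) : Ordinal) := by
      rw [Nat.cast_succ]
    rw [hsucc, hf' n, hf' (n + 1), hp' n]
    exact ⟨ρseq n, hstepSeq n⟩
  · -- no limits below ω
    intro l hl hlim
    exact absurd (lt_of_lt_of_le hl (Ordinal.omega0_le_of_isSuccLimit hlim))
      (lt_irrefl l)
  · exact Ordinal.isSuccLimit_omega0
  · -- not convergent
    intro hfor
    obtain ⟨β, hβω, hall⟩ := hfor k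
    obtain ⟨n₀, rfl⟩ := Ordinal.lt_omega0.mp hβω
    obtain ⟨j, hj⟩ := shal' n₀
    have hle : ((n₀ : ℕ) : Ordinal) ≤ ((n₀ + j : ℕ) : Ordinal) :=
      Nat.cast_le.mpr (by omega)
    have hlt : ((n₀ + j : ℕ) : Ordinal) < Ordinal.omega0 :=
      Ordinal.nat_lt_omega0 _
    have := hall ((n₀ + j : ℕ) : Ordinal) hle hlt
    rw [hp' (n₀ + j)] at this
    omega

end WOInf
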